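/- arXiv:1612.00034 — 6 statements merged into one kernel-verified Lean document; each statement's English description precedes it below -/
import Mathlib

section
/- Under the same hypotheses (w, w' differ in exactly one coordinate, λ = shRSK(w), λ' = shRSK(w')), for every k ∈ [d] one has |λ_k − λ'_k| ≤ 2. -/
/-- `Gk w k` is the maximum total length of a union of `k` disjoint weakly
increasing subsequences of the word `w` (by Greene's theorem, this equals
`λ₁ + ⋯ + λ_k` where `λ = shRSK w`). -/
noncomputable def Gk {n d : ℕ} (w : Fin n → Fin d) (k : ℕ) : ℕ :=
  sSup {m | ∃ S : Fin k → Finset (Fin n),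
    (∀ i j, i ≠ j → Disjoint (S i) (S j)) ∧
    (∀ i, ∀ a ∈ S i, ∀ b ∈ S i, a ≤ b → w a ≤ w b) ∧
    m = ∑ i, (S i).card}

lemma gk_bdd {n d : ℕ} (w : Fin n → Fin d) (k : ℕ) :
    BddAbove {m | ∃ S : Fin k → Finset (Fin n),
      (∀ i j, i ≠ j → Disjoint (S i) (S j)) ∧
      (∀ i, ∀ a ∈ S i, ∀ b ∈ S i, a ≤ b → w a ≤ w b) ∧
      m = ∑ i, (S i).card} := by
  refine ⟨k * n, fun m hm => ?_⟩
  obtain ⟨S, _, _, rfl⟩ := hm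
  calc ∑ i, (S i).card ≤ ∑ _i : Fin k, n :=
        Finset.sum_le_sum fun i _ => by simpa using Finset.card_le_univ (S i)
    _ = k * n := by simp [Finset.sum_const, mul_comm]

lemma gk_step {n d : ℕ} (w w' : Fin n → Fin d) (t : Fin n)
    (h : ∀ s, s ≠ t → w s = w' s) (k : ℕ) : Gk w k ≤ Gk w' k + 1 := by
  unfold Gk
  refine csSup_le ⟨0, fun _ => ∅, by simp, by simp, by simp⟩ fun m hm => ?_
  obtain ⟨S, hdisj, hmono, rfl⟩ := hm
  have hcard : ∀ i, (S i).card = ((S i).erase t).card + (if t ∈ S i then 1 else 0) := by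
    intro i
    by_cases ht : t ∈ S i
    · have hpos : 0 < (S i).card := Finset.card_pos.mpr ⟨t, ht⟩
      simp only [Finset.card_erase_of_mem ht, if_pos ht]
      omega
    · simp only [Finset.erase_eq_of_notMem ht, if_neg ht, Nat.add_zero]
  have hite : (∑ i, if t ∈ S i then 1 else 0) ≤ 1 := by
    by_cases hex : ∃ i, t ∈ S i
    · obtain ⟨i₀, hi₀⟩ := hex
      rw [Finset.sum_eq_single i₀]
      · split <;> omega
      · intro b _ hb
        have : t ∉ S b := fun htb => Finset.disjoint_left.mp (hdisj b i₀ hb) htb hi₀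
        simp [this]
      · simp
    · push_neg at hex
      simp [hex]
  have hmem : (∑ i, ((S i).erase t).card) ∈ {m | ∃ S : Fin k → Finset (Fin n),
      (∀ i j, i ≠ j → Disjoint (S i) (S j)) ∧
      (∀ i, ∀ a ∈ S i, ∀ b ∈ S i, a ≤ b → w' a ≤ w' b) ∧
      m = ∑ i, (S i).card} := by
    refine ⟨fun i => (S i).erase t, fun i j hij => ?_, fun i a ha b hb hab => ?_, rfl⟩
    · exact (hdisj i j hij).mono (Finset.erase_subset _ _) (Finset.erase_subset _ _)
    · have ha' := Finset.mem_of_mem_erase ha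
      have hb' := Finset.mem_of_mem_erase hb
      rw [← h a (Finset.ne_of_mem_erase ha), ← h b (Finset.ne_of_mem_erase hb)]
      exact hmono i a ha' b hb' hab
  have hle : ∑ i, ((S i).erase t).card ≤ sSup {m | ∃ S : Fin k → Finset (Fin n),
      (∀ i j, i ≠ j → Disjoint (S i) (S j)) ∧
      (∀ i, ∀ a ∈ S i, ∀ b ∈ S i, a ≤ b → w' a ≤ w' b) ∧
      m = ∑ i, (S i).card} := le_csSup (gk_bdd w' k) hmem
  calc ∑ i, (S i).card
      = ∑ i, ((S i).erase t).card + ∑ i, (if t ∈ S i then 1 else 0) := by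
        rw [← Finset.sum_add_distrib]; exact Finset.sum_congr rfl fun i _ => hcard i
    _ ≤ ∑ i, ((S i).erase t).card + 1 := Nat.add_le_add_left hite _
    _ ≤ _ + 1 := Nat.add_le_add_right hle 1

/-- If words `w, w'` differ in exactly one coordinate, then for every `k ∈ [d]`,
`|λ_k − λ'_k| ≤ 2`, where `λ_k = Gk w k − Gk w (k−1)` by Greene's theorem. -/
theorem stmt1 {n d : ℕ} (w w' : Fin n → Fin d)
    (hdiff : ∃ t : Fin n, w t ≠ w' t ∧ ∀ s, s ≠ t → w s = w' s) :
    ∀ k, 1 ≤ k → k ≤ d →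
      |((Gk w k : ℤ) - (Gk w (k-1) : ℤ)) - ((Gk w' k : ℤ) - (Gk w' (k-1) : ℤ))| ≤ 2 := by
  obtain ⟨t, _, h⟩ := hdiff
  have h' : ∀ s, s ≠ t → w' s = w s := fun s hs => (h s hs).symm
  intro k _ _
  have h1 := gk_step w w' t h k
  have h2 := gk_step w' w t h' k
  have h3 := gk_step w w' t h (k - 1)
  have h4 := gk_step w' w t h' (k - 1)
  rw [abs_le]
  omega
end

section
/- Let α₁ ≥ α₂ ≥ ⋯ ≥ α_d > 0 and let β₁,…,β_d be a permutation of α₁,…,α_d. Then Σ_{i=1}^d (√αᵢ − √βᵢ)² ≤ 2 Σ_{j=1}^{d−1} ((α_j − α_{j+1})/α_j) · Σ_{i=1}^{j} (αᵢ − βᵢ). -/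
open Finset Real

namespace Stmt5Aux

variable {d : ℕ}

/-- `β` as a total function on `ℕ` induced by a permutation `σ`. -/
noncomputable def B (α : ℕ → ℝ) (σ : Equiv.Perm (Fin d)) : ℕ → ℝ :=
  fun i => if h : i < d then α ((σ ⟨i, h⟩ : Fin d) : ℕ) else α i

lemma B_lt (α : ℕ → ℝ) (σ : Equiv.Perm (Fin d)) {i : ℕ} (h : i < d) :
    B α σ i = α ((σ ⟨i, h⟩ : Fin d) : ℕ) := by
  simp [B, h]

/-- Sum over any `n`-element subset of `[0,d)` is at most the sum of the first `n` terms. -/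
lemma sum_subset_le (α : ℕ → ℝ)
    (hsorted : ∀ i j, i ≤ j → j < d → α j ≤ α i) :
    ∀ n (s : Finset ℕ), s.card = n → (∀ x ∈ s, x < d) →
      ∑ x ∈ s, α x ≤ ∑ i ∈ range n, α i := by
  intro n
  induction n with
  | zero => intro s hc _; rw [Finset.card_eq_zero.mp hc]; simp
  | succ n ih =>
      intro s hc hlt
      have hne : s.Nonempty := Finset.card_pos.mp (by omega)
      set x := s.max' hne with hx
      have hxs : x ∈ s := s.max'_mem hne
      have hsub : s ⊆ Finset.range (x + 1) := by
        intro y hy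
        exact Finset.mem_range.mpr (Nat.lt_succ_of_le (s.le_max' y hy))
      have hcard : n + 1 ≤ x + 1 := by
        calc n + 1 = s.card := hc.symm
        _ ≤ (Finset.range (x + 1)).card := Finset.card_le_card hsub
        _ = x + 1 := by simp
      have hnx : n ≤ x := by omega
      have hxd : x < d := hlt x hxs
      have herase : (s.erase x).card = n := by
        rw [Finset.card_erase_of_mem hxs, hc]
        omega
      have h1 : ∑ y ∈ s.erase x, α y ≤ ∑ i ∈ range n, α i :=
        ih (s.erase x) herase (fun y hy => hlt y (Finset.mem_of_mem_erase hy))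
      calc ∑ y ∈ s, α y = α x + ∑ y ∈ s.erase x, α y := (Finset.add_sum_erase s α hxs).symm
      _ ≤ α n + ∑ i ∈ range n, α i := by
          have := hsorted n x hnx hxd
          linarith
      _ = ∑ i ∈ range (n + 1), α i := by rw [Finset.sum_range_succ]; ring

/-- prefix sums of `B` are at most prefix sums of `α`. -/
lemma prefix_le (α : ℕ → ℝ)
    (hsorted : ∀ i j, i ≤ j → j < d → α j ≤ α i)
    (σ : Equiv.Perm (Fin d)) (m : ℕ) (hm : m ≤ d) :
    ∑ i ∈ range m, B α σ i ≤ ∑ i ∈ range m, α i := by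
  set f : ℕ → ℕ := fun i => if h : i < d then ((σ ⟨i, h⟩ : Fin d) : ℕ) else i with hf
  have hinj : ∀ x ∈ range m, ∀ y ∈ range m, f x = f y → x = y := by
    intro x hx y hy hxy
    have hxd : x < d := lt_of_lt_of_le (Finset.mem_range.mp hx) hm
    have hyd : y < d := lt_of_lt_of_le (Finset.mem_range.mp hy) hm
    simp only [hf, dif_pos hxd, dif_pos hyd] at hxy
    have : σ ⟨x, hxd⟩ = σ ⟨y, hyd⟩ := Fin.ext hxy
    have := σ.injective this
    exact congrArg Fin.val this
  have h1 : ∑ x ∈ (range m).image f, α x = ∑ i ∈ range m, α (f i) :=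
    Finset.sum_image hinj
  have h2 : ∑ i ∈ range m, B α σ i = ∑ i ∈ range m, α (f i) := by
    apply Finset.sum_congr rfl
    intro i hi
    have hid : i < d := lt_of_lt_of_le (Finset.mem_range.mp hi) hm
    simp [B, hf, hid]
  have hcard : ((range m).image f).card = m := by
    rw [Finset.card_image_of_injOn hinj, Finset.card_range]
  have hlt : ∀ x ∈ (range m).image f, x < d := by
    intro x hx
    obtain ⟨i, hi, rfl⟩ := Finset.mem_image.mp hx
    have hid : i < d := lt_of_lt_of_le (Finset.mem_range.mp hi) hm
    simp only [hf, dif_pos hid]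
    exact (σ ⟨i, hid⟩).isLt
  rw [h2, ← h1]
  exact sum_subset_le α hsorted m _ hcard hlt

/-- pigeonhole: some index ≥ p maps to an index ≤ p. -/
lemma exists_cross (σ : Equiv.Perm (Fin d)) (p : ℕ) (hp : p < d) :
    ∃ q : Fin d, p ≤ (q : ℕ) ∧ ((σ q : Fin d) : ℕ) ≤ p := by
  by_contra h
  push_neg at h
  set f : ℕ → ℕ := fun i => if h : i < d then ((σ ⟨i, h⟩ : Fin d) : ℕ) else i with hf
  have hmap : ∀ a ∈ Finset.Ico p d, f a ∈ Finset.Ico (p + 1) d := by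
    intro a ha
    obtain ⟨hpa, had⟩ := Finset.mem_Ico.mp ha
    have := h ⟨a, had⟩ hpa
    simp only [hf, dif_pos had]
    exact Finset.mem_Ico.mpr ⟨by omega, (σ ⟨a, had⟩).isLt⟩
  have hinj : Set.InjOn f ↑(Finset.Ico p d) := by
    intro x hx y hy hxy
    have hxd : x < d := (Finset.mem_Ico.mp hx).2
    have hyd : y < d := (Finset.mem_Ico.mp hy).2
    simp only [hf, dif_pos hxd, dif_pos hyd] at hxy
    exact congrArg Fin.val (σ.injective (Fin.ext hxy))
  have := Finset.card_le_card_of_injOn f hmap hinj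
  rw [Nat.card_Ico, Nat.card_Ico] at this
  omega

/-- lower bound on the sum of weights. -/
lemma weight_sum (α : ℕ → ℝ)
    (hpos : ∀ i < d, 0 < α i)
    (hsorted : ∀ i j, i ≤ j → j < d → α j ≤ α i)
    (p : ℕ) (hp : p < d) :
    ∀ m, p + m < d →
      1 - α (p + m) / α p ≤ ∑ j ∈ Finset.Ico p (p + m), (α j - α (j + 1)) / α j := by
  intro m
  induction m with
  | zero =>
      intro _
      simp [div_self (ne_of_gt (hpos p hp))]
  | succ m ih =>
      intro hmd
      have hpm : p + m < d := by omega
      have ih' := ih hpm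
      rw [show p + (m + 1) = (p + m) + 1 by ring, Finset.sum_Ico_succ_top (by omega)]
      have hq := hpos (p + m) hpm
      have hq1 := hpos (p + m + 1) (by omega)
      have hpp := hpos p hp
      have hle : α (p + m) ≤ α p := hsorted p (p + m) (by omega) hpm
      have hle2 : α (p + m + 1) ≤ α (p + m) := hsorted (p + m) (p + m + 1) (by omega) (by omega)
      have key : (α (p + m) - α (p + m + 1)) / α p ≤ (α (p + m) - α (p + m + 1)) / α (p + m) :=
        div_le_div_of_nonneg_left (by linarith) hq hle
      have e1 : α (p + m) / α p - α (p + m + 1) / α p = (α (p + m) - α (p + m + 1)) / α p := by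
        ring
      have : 1 - α (p + m + 1) / α p ≤ (1 - α (p + m) / α p) + (α (p + m) - α (p + m + 1)) / α (p + m) := by
        have : 1 - α (p + m + 1) / α p = (1 - α (p + m) / α p) + (α (p + m) - α (p + m + 1)) / α p := by
          field_simp
          ring
        linarith
      linarith

end Stmt5Aux

namespace Stmt5Aux

noncomputable def Se (α : ℕ → ℝ) (σ : Equiv.Perm (Fin d)) (j : ℕ) : ℝ :=
  ∑ i ∈ range (j + 1), (α i - B α σ i)

noncomputable def LHSe (α : ℕ → ℝ) (σ : Equiv.Perm (Fin d)) : ℝ :=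
  ∑ i ∈ range d, (Real.sqrt (α i) - Real.sqrt (B α σ i)) ^ 2

noncomputable def RHSe (α : ℕ → ℝ) (σ : Equiv.Perm (Fin d)) : ℝ :=
  2 * ∑ j ∈ range (d - 1), ((α j - α (j + 1)) / α j) * Se α σ j

lemma main (α : ℕ → ℝ)
    (hpos : ∀ i < d, 0 < α i)
    (hsorted : ∀ i j, i ≤ j → j < d → α j ≤ α i) :
    ∀ n (σ : Equiv.Perm (Fin d)), (∀ i, i < d - n → B α σ i = α i) →
      LHSe α σ ≤ RHSe α σ := by
  intro n
  induction n with
  | zero =>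
      intro σ hpre
      have hL : LHSe α σ = 0 := by
        apply Finset.sum_eq_zero
        intro i hi
        rw [hpre i (by simpa using hi)]
        ring
      have hR : RHSe α σ = 0 := by
        unfold RHSe
        rw [Finset.sum_eq_zero, mul_zero]
        intro j hj
        have hj' : j < d - 1 := Finset.mem_range.mp hj
        have : Se α σ j = 0 := by
          apply Finset.sum_eq_zero
          intro i hi
          have : i < d := by have := Finset.mem_range.mp hi; omega
          rw [hpre i this]
          ring
        rw [this, mul_zero]
      rw [hL, hR]
  | succ n ih =>
      intro σ hpre
      by_cases hdeg : d - n = d - (n + 1)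
      · exact ih σ (fun i hi => hpre i (by omega))
      · set p := d - (n + 1) with hpdef
        have hp : p < d := by omega
        have hpn : p + 1 = d - n := by omega
        by_cases hA : B α σ p = α p
        · apply ih σ
          intro i hi
          rcases (by omega : i < p ∨ i = p) with h | h
          · exact hpre i h
          · rw [h]; exact hA
        · -- B σ p < α p, find q ≥ p with σ q ≤ p, swap.
          have hprefix_eq : ∀ τ : Equiv.Perm (Fin d), (∀ i, i < p → B α τ i = α i) →
              B α τ p ≤ α p := by
            intro τ hτ
            have h1 := prefix_le α hsorted τ (p + 1) (by omega)
            rw [Finset.sum_range_succ, Finset.sum_range_succ] at h1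
            have h2 : ∑ i ∈ range p, B α τ i = ∑ i ∈ range p, α i :=
              Finset.sum_congr rfl (fun i hi => hτ i (Finset.mem_range.mp hi))
            rw [h2] at h1
            linarith
          have hup : B α σ p ≤ α p := hprefix_eq σ hpre
          obtain ⟨q, hpq, hσq⟩ := exists_cross σ p hp
          have hqd : (q : ℕ) < d := q.isLt
          have hBq : B α σ (q : ℕ) = α ((σ q : Fin d) : ℕ) := by
            rw [B_lt α σ hqd]
          have hv : α p ≤ B α σ (q : ℕ) := by
            rw [hBq]
            exact hsorted _ p hσq hp
          have hneq : p ≠ (q : ℕ) := by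
            intro h
            apply hA
            refine le_antisymm hup ?_
            calc α p ≤ B α σ (q : ℕ) := hv
            _ = B α σ p := by rw [h]
          have hplt : p < (q : ℕ) := lt_of_le_of_ne hpq hneq
          set P : Fin d := ⟨p, hp⟩ with hPdef
          set σ' := σ * Equiv.swap P q with hσ'def
          -- basic B facts
          have hBP : B α σ p = α ((σ P : Fin d) : ℕ) := by
            rw [B_lt α σ hp]
          have hswap_other : ∀ i, i < d → i ≠ p → i ≠ (q : ℕ) →
              B α σ' i = B α σ i := by
            intro i hid hip hiq
            rw [B_lt α σ' hid, B_lt α σ hid]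
            congr 2
            rw [Equiv.Perm.mul_apply]
            congr 1
            apply Equiv.swap_apply_of_ne_of_ne
            · exact fun h => hip (congrArg Fin.val h)
            · exact fun h => hiq (congrArg Fin.val h)
          have hswap_p : B α σ' p = B α σ (q : ℕ) := by
            rw [B_lt α σ' hp, hBq]
            congr 2
            rw [Equiv.Perm.mul_apply]
            congr 1
            exact Equiv.swap_apply_left P q
          have hswap_q : B α σ' (q : ℕ) = B α σ p := by
            rw [B_lt α σ' hqd, hBP]
            congr 2
            rw [Equiv.Perm.mul_apply]
            congr 1
            have : (⟨(q : ℕ), hqd⟩ : Fin d) = q := by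
              apply Fin.ext; rfl
            rw [this]
            exact Equiv.swap_apply_right P q
          -- new permutation has longer fixed prefix
          have hpre' : ∀ i, i < d - n → B α σ' i = α i := by
            intro i hi
            rcases (by omega : i < p ∨ i = p) with h | h
            · rw [hswap_other i (by omega) (by omega) (by omega)]
              exact hpre i h
            · subst h
              apply le_antisymm
              · apply hprefix_eq σ'
                intro i' hi'
                rw [hswap_other i' (by omega) (by omega) (by omega)]
                exact hpre i' hi'
              · rw [hswap_p]; exact hv
          have hIH := ih σ' hpre'
          -- notation
          set a := α p with hadef
          set c := α (q : ℕ) with hcdef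
          set u := B α σ p with hudef
          set v := B α σ (q : ℕ) with hvdef
          have hapos : 0 < a := hpos p hp
          have hcpos : 0 < c := hpos _ hqd
          have hupos : 0 < u := by
            rw [hBP]; exact hpos _ (σ P).isLt
          have hvpos : 0 < v := by
            rw [hBq]; exact hpos _ (σ q).isLt
          have hca : c ≤ a := hsorted p (q : ℕ) hpq hqd
          have hua : u < a := lt_of_le_of_ne hup hA
          have hav : a ≤ v := hv
          set δ := v - u with hδdef
          have hδpos : 0 < δ := by
            rw [hδdef]; linarith
          -- LHS swap identity
          have hLswap : LHSe α σ = LHSe α σ' +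
              (((Real.sqrt a - Real.sqrt u) ^ 2 + (Real.sqrt c - Real.sqrt v) ^ 2)
                - ((Real.sqrt a - Real.sqrt v) ^ 2 + (Real.sqrt c - Real.sqrt u) ^ 2)) := by
            have hqmem : (q : ℕ) ∈ (range d).erase p := by
              rw [Finset.mem_erase]
              exact ⟨(Ne.symm hneq), Finset.mem_range.mpr hqd⟩
            have hsplit : ∀ (f : ℕ → ℝ),
                ∑ i ∈ range d, f i
                  = f p + f (q : ℕ) + ∑ i ∈ ((range d).erase p).erase (q : ℕ), f i := by
              intro f
              rw [← Finset.add_sum_erase (range d) f (Finset.mem_range.mpr hp),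
                  ← Finset.add_sum_erase _ f hqmem, add_assoc]
            unfold LHSe
            rw [hsplit, hsplit]
            have htail : ∑ i ∈ ((range d).erase p).erase (q : ℕ),
                (Real.sqrt (α i) - Real.sqrt (B α σ i)) ^ 2
                = ∑ i ∈ ((range d).erase p).erase (q : ℕ),
                (Real.sqrt (α i) - Real.sqrt (B α σ' i)) ^ 2 := by
              apply Finset.sum_congr rfl
              intro i hi
              rw [Finset.mem_erase] at hi
              obtain ⟨hiq, hi2⟩ := hi
              rw [Finset.mem_erase] at hi2
              obtain ⟨hip, hi3⟩ := hi2
              rw [hswap_other i (Finset.mem_range.mp hi3) hip hiq]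
            rw [htail, hswap_p, hswap_q, hadef, hcdef, hudef, hvdef]
            ring
          -- Se swap identity
          have hSe : ∀ j, j ∈ range (d - 1) →
              Se α σ j = Se α σ' j + (if p ≤ j ∧ j < (q : ℕ) then δ else 0) := by
            intro j hj
            have hjd : j < d - 1 := Finset.mem_range.mp hj
            unfold Se
            rcases (by omega : j < p ∨ (p ≤ j ∧ j < (q : ℕ)) ∨ (q : ℕ) ≤ j) with h | h | h
            · rw [if_neg (by omega)]
              rw [add_zero]
              apply Finset.sum_congr rfl
              intro i hi
              have hij : i < j + 1 := Finset.mem_range.mp hi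
              rw [hswap_other i (by omega) (by omega) (by omega)]
            · rw [if_pos h]
              have hpmem : p ∈ range (j + 1) := Finset.mem_range.mpr (by omega)
              rw [← Finset.add_sum_erase _ _ hpmem, ← Finset.add_sum_erase _ _ hpmem]
              have htail : ∑ i ∈ (range (j + 1)).erase p, (α i - B α σ i)
                  = ∑ i ∈ (range (j + 1)).erase p, (α i - B α σ' i) := by
                apply Finset.sum_congr rfl
                intro i hi
                rw [Finset.mem_erase] at hi
                have hij : i < j + 1 := Finset.mem_range.mp hi.2
                rw [hswap_other i (by omega) hi.1 (by omega)]
              rw [htail, hswap_p, hδdef, hudef, hvdef]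
              ring
            · rw [if_neg (by omega), add_zero]
              have hpmem : p ∈ range (j + 1) := Finset.mem_range.mpr (by omega)
              have hqmem : (q : ℕ) ∈ (range (j + 1)).erase p := by
                rw [Finset.mem_erase]
                exact ⟨Ne.symm hneq, Finset.mem_range.mpr (by omega)⟩
              rw [← Finset.add_sum_erase _ _ hpmem, ← Finset.add_sum_erase _ _ hqmem,
                  ← Finset.add_sum_erase _ (fun i => α i - B α σ' i) hpmem,
                  ← Finset.add_sum_erase _ (fun i => α i - B α σ' i) hqmem]
              have htail : ∑ i ∈ ((range (j + 1)).erase p).erase (q : ℕ), (α i - B α σ i)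
                  = ∑ i ∈ ((range (j + 1)).erase p).erase (q : ℕ), (α i - B α σ' i) := by
                apply Finset.sum_congr rfl
                intro i hi
                rw [Finset.mem_erase] at hi
                obtain ⟨hiq, hi2⟩ := hi
                rw [Finset.mem_erase] at hi2
                have hij : i < j + 1 := Finset.mem_range.mp hi2.2
                rw [hswap_other i (by omega) hi2.1 hiq]
              rw [htail, hswap_p, hswap_q, hudef, hvdef]
              ring
          -- RHS swap identity
          set W := ∑ j ∈ Finset.Ico p (q : ℕ), (α j - α (j + 1)) / α j with hWdef
          have hRswap : RHSe α σ = RHSe α σ' + 2 * δ * W := by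
            unfold RHSe
            have h1 : ∑ j ∈ range (d - 1), ((α j - α (j + 1)) / α j) * Se α σ j
                = ∑ j ∈ range (d - 1), (((α j - α (j + 1)) / α j) * Se α σ' j
                    + ((α j - α (j + 1)) / α j) * (if p ≤ j ∧ j < (q : ℕ) then δ else 0)) := by
              apply Finset.sum_congr rfl
              intro j hj
              rw [hSe j hj]
              ring
            rw [h1, Finset.sum_add_distrib]
            have h2 : ∑ j ∈ range (d - 1),
                ((α j - α (j + 1)) / α j) * (if p ≤ j ∧ j < (q : ℕ) then δ else 0)
                = δ * W := by
              rw [hWdef, Finset.mul_sum]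
              rw [← Finset.sum_subset (s₁ := Finset.Ico p (q : ℕ))]
              · apply Finset.sum_congr rfl
                intro j hj
                rw [Finset.mem_Ico] at hj
                rw [if_pos (by omega)]
                ring
              · intro x hx
                rw [Finset.mem_Ico] at hx
                exact Finset.mem_range.mpr (by omega)
              · intro x hx hx2
                rw [Finset.mem_Ico] at hx2
                rw [if_neg (by omega), mul_zero]
            rw [h2]
            ring
          -- key analytic inequality
          have hsa := Real.sqrt_pos.mpr hapos
          have hsc := Real.sqrt_nonneg c
          have hsu := Real.sqrt_nonneg u
          have hsv := Real.sqrt_nonneg v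
          have hsca : Real.sqrt c ≤ Real.sqrt a := Real.sqrt_le_sqrt hca
          have hsuv : Real.sqrt u ≤ Real.sqrt v := Real.sqrt_le_sqrt (by linarith)
          have hsav : Real.sqrt a ≤ Real.sqrt v := Real.sqrt_le_sqrt hav
          have hma : Real.sqrt a * Real.sqrt a = a := Real.mul_self_sqrt hapos.le
          have hmc : Real.sqrt c * Real.sqrt c = c := Real.mul_self_sqrt hcpos.le
          have hmu : Real.sqrt u * Real.sqrt u = u := Real.mul_self_sqrt hupos.le
          have hmv : Real.sqrt v * Real.sqrt v = v := Real.mul_self_sqrt hvpos.le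
          set X := (Real.sqrt a - Real.sqrt c) * (Real.sqrt v - Real.sqrt u) with hXdef
          have hXnn : 0 ≤ X := mul_nonneg (by linarith) (by linarith)
          have hbig : a ≤ (Real.sqrt v + Real.sqrt u) * (Real.sqrt a + Real.sqrt c) := by
            nlinarith [mul_nonneg hsv hsc, mul_nonneg hsu hsa.le, mul_nonneg hsu hsc,
              mul_le_mul_of_nonneg_right hsav hsa.le]
          have hprod : X * ((Real.sqrt v + Real.sqrt u) * (Real.sqrt a + Real.sqrt c))
              = (v - u) * (a - c) := by
            rw [hXdef]
            calc (Real.sqrt a - Real.sqrt c) * (Real.sqrt v - Real.sqrt u)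
                * ((Real.sqrt v + Real.sqrt u) * (Real.sqrt a + Real.sqrt c))
                = (Real.sqrt a * Real.sqrt a - Real.sqrt c * Real.sqrt c)
                  * (Real.sqrt v * Real.sqrt v - Real.sqrt u * Real.sqrt u) := by ring
            _ = (a - c) * (v - u) := by rw [hma, hmc, hmu, hmv]
            _ = (v - u) * (a - c) := by ring
          have hXa : X * a ≤ (v - u) * (a - c) := by
            rw [← hprod]
            exact mul_le_mul_of_nonneg_left hbig hXnn
          have hWlb : 1 - c / a ≤ W := by
            have hw := weight_sum α hpos hsorted p hp ((q : ℕ) - p) (by omega)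
            have : p + ((q : ℕ) - p) = (q : ℕ) := by omega
            rw [this] at hw
            rw [hWdef, ← hadef, ← hcdef] at *
            exact hw
          have hX2 : X ≤ δ * W := by
            have h1 : X ≤ (v - u) * (a - c) / a := by
              rw [le_div_iff₀ hapos]
              exact hXa
            have h2 : (v - u) * (a - c) / a = δ * (1 - c / a) := by
              rw [hδdef]
              field_simp
            have h3 : δ * (1 - c / a) ≤ δ * W :=
              mul_le_mul_of_nonneg_left hWlb hδpos.le
            calc X ≤ (v - u) * (a - c) / a := h1
            _ = δ * (1 - c / a) := h2
            _ ≤ δ * W := h3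
          -- conclude
          have hD : ((Real.sqrt a - Real.sqrt u) ^ 2 + (Real.sqrt c - Real.sqrt v) ^ 2)
              - ((Real.sqrt a - Real.sqrt v) ^ 2 + (Real.sqrt c - Real.sqrt u) ^ 2)
              = 2 * X := by
            rw [hXdef]; ring
          rw [hLswap, hRswap, hD]
          linarith

end Stmt5Aux

/-- Rearrangement lemma: for a positive nonincreasing sequence `α₁ ≥ ⋯ ≥ α_d > 0`
and a permutation `β` of it,
`Σ (√αᵢ − √βᵢ)² ≤ 2 Σ_j ((α_j − α_{j+1})/α_j) Σ_{i≤j} (αᵢ − βᵢ)`.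
(Indices are 0-based: `α 0, …, α (d-1)`.) -/
theorem stmt5 {d : ℕ} (α β : ℕ → ℝ)
    (hpos : ∀ i < d, 0 < α i)
    (hsorted : ∀ i j, i ≤ j → j < d → α j ≤ α i)
    (hperm : ∃ σ : Equiv.Perm (Fin d), ∀ i : Fin d, β (i : ℕ) = α ((σ i : Fin d) : ℕ)) :
    ∑ i ∈ Finset.range d, (Real.sqrt (α i) - Real.sqrt (β i)) ^ 2
      ≤ 2 * ∑ j ∈ Finset.range (d - 1),
          ((α j - α (j + 1)) / α j) * ∑ i ∈ Finset.range (j + 1), (α i - β i) := by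
  obtain ⟨σ, hσ⟩ := hperm
  have hβ : ∀ i, i < d → β i = Stmt5Aux.B α σ i := by
    intro i hi
    rw [Stmt5Aux.B_lt α σ hi]
    exact hσ ⟨i, hi⟩
  have hmain := Stmt5Aux.main α hpos hsorted d σ (fun i hi => absurd hi (by omega))
  have hL : ∑ i ∈ Finset.range d, (Real.sqrt (α i) - Real.sqrt (β i)) ^ 2
      = Stmt5Aux.LHSe α σ := by
    apply Finset.sum_congr rfl
    intro i hi
    rw [hβ i (Finset.mem_range.mp hi)]
  have hR : ∑ j ∈ Finset.range (d - 1),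
        ((α j - α (j + 1)) / α j) * ∑ i ∈ Finset.range (j + 1), (α i - β i)
      = ∑ j ∈ Finset.range (d - 1), ((α j - α (j + 1)) / α j) * Stmt5Aux.Se α σ j := by
    apply Finset.sum_congr rfl
    intro j hj
    have hjd : j < d - 1 := Finset.mem_range.mp hj
    congr 1
    apply Finset.sum_congr rfl
    intro i hi
    have hij : i < j + 1 := Finset.mem_range.mp hi
    rw [hβ i (by omega)]
  rw [hL, hR]
  exact hmain
end

section
/- Let α₁ > α₂ > ⋯ > α_d > 0 be a probability distribution and k ∈ [d]. Let h ∼ Multinomial(n, α) and define the 'modified density' f(h) = 1 + Σ_{1≤i<j≤d} (α_j/(αᵢ − α_j)) · (hᵢ/(αᵢ n) − h_j/(α_j n)). Then E[f(h) · (h₁+⋯+h_k − (α₁+⋯+α_k)n)] = Σ_{i ≤ k < j} α_j/(αᵢ − α_j). -/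
lemma sum_prod_eq {n d : ℕ} (g : Fin n → Fin d → ℝ) :
    ∑ w : Fin n → Fin d, ∏ t, g t (w t) = ∏ t, ∑ i, g t i := by
  rw [Finset.prod_univ_sum, Fintype.piFinset_univ]

lemma E0 {n d : ℕ} (α : Fin d → ℝ) (hsum : ∑ i, α i = 1) :
    ∑ w : Fin n → Fin d, ∏ t, α (w t) = 1 := by
  rw [sum_prod_eq (fun _ x => α x)]
  simp [hsum]

lemma Eind1 {n d : ℕ} (α : Fin d → ℝ) (hsum : ∑ i, α i = 1) (t₀ : Fin n) (i : Fin d) :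
    ∑ w : Fin n → Fin d, (∏ t, α (w t)) * (if w t₀ = i then (1:ℝ) else 0) = α i := by
  have key : ∀ w : Fin n → Fin d,
      (∏ t, α (w t)) * (if w t₀ = i then (1:ℝ) else 0)
        = ∏ t, (if t = t₀ then (if w t = i then α (w t) else 0) else α (w t)) := by
    intro w
    by_cases hw : w t₀ = i
    · rw [if_pos hw, mul_one]
      exact Finset.prod_congr rfl (fun t _ => by by_cases ht : t = t₀ <;> simp [ht, hw])
    · rw [if_neg hw, mul_zero]
      exact (Finset.prod_eq_zero (Finset.mem_univ t₀) (by simp [hw])).symm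
  simp_rw [key]
  rw [sum_prod_eq (fun t x => if t = t₀ then (if x = i then α x else 0) else α x)]
  rw [Finset.prod_eq_single t₀]
  · simp
  · intro t _ ht; simp [ht, hsum]
  · simp

lemma Eind2 {n d : ℕ} (α : Fin d → ℝ) (hsum : ∑ i, α i = 1) {t₀ t₁ : Fin n} (ht : t₀ ≠ t₁)
    (i j : Fin d) :
    ∑ w : Fin n → Fin d, (∏ t, α (w t)) *
      ((if w t₀ = i then (1:ℝ) else 0) * (if w t₁ = j then (1:ℝ) else 0)) = α i * α j := by
  have key : ∀ w : Fin n → Fin d,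
      (∏ t, α (w t)) * ((if w t₀ = i then (1:ℝ) else 0) * (if w t₁ = j then (1:ℝ) else 0))
        = ∏ t, (if t = t₀ then (if w t = i then α (w t) else 0)
            else if t = t₁ then (if w t = j then α (w t) else 0) else α (w t)) := by
    intro w
    by_cases h0 : w t₀ = i
    · by_cases h1 : w t₁ = j
      · rw [if_pos h0, if_pos h1, mul_one, mul_one]
        refine Finset.prod_congr rfl fun t _ => ?_
        by_cases e0 : t = t₀
        · simp [e0, h0]
        · by_cases e1 : t = t₁ <;> simp [e0, e1, h1, Ne.symm ht]
      · rw [if_pos h0, if_neg h1, mul_zero, mul_zero]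
        exact (Finset.prod_eq_zero (Finset.mem_univ t₁) (by simp [(Ne.symm ht), h1])).symm
    · rw [if_neg h0, zero_mul, mul_zero]
      exact (Finset.prod_eq_zero (Finset.mem_univ t₀) (by simp [h0])).symm
  simp_rw [key]
  rw [sum_prod_eq (fun t x => if t = t₀ then (if x = i then α x else 0)
      else if t = t₁ then (if x = j then α x else 0) else α x)]
  have key2 : ∀ t : Fin n, (∑ x, if t = t₀ then (if x = i then α x else 0)
      else if t = t₁ then (if x = j then α x else 0) else α x)
      = (if t = t₀ then α i else 1) * (if t = t₁ then α j else 1) := by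
    intro t
    by_cases e0 : t = t₀
    · subst e0; simp [ht]
    · by_cases e1 : t = t₁ <;> simp [e0, e1, hsum, Ne.symm ht]
  simp_rw [key2]
  rw [Finset.prod_mul_distrib]
  simp

lemma hcastlem {n d : ℕ} (h : (Fin n → Fin d) → Fin d → ℕ)
    (hh : ∀ w i, h w i = (Finset.univ.filter (fun t => w t = i)).card)
    (w : Fin n → Fin d) (ℓ : Fin d) :
    (h w ℓ : ℝ) = ∑ t, if w t = ℓ then (1:ℝ) else 0 := by
  rw [hh, Finset.card_filter]
  push_cast
  simp

lemma Eind_diag {n d : ℕ} (α : Fin d → ℝ) (hsum : ∑ i, α i = 1) (t : Fin n) (ℓ m : Fin d) :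
    ∑ w : Fin n → Fin d, (∏ s, α (w s)) *
      ((if w t = ℓ then (1:ℝ) else 0) * (if w t = m then (1:ℝ) else 0))
      = if ℓ = m then α ℓ else 0 := by
  by_cases e : ℓ = m
  · subst e
    rw [if_pos rfl]
    have : ∀ w : Fin n → Fin d,
        ((if w t = ℓ then (1:ℝ) else 0) * (if w t = ℓ then (1:ℝ) else 0))
          = (if w t = ℓ then (1:ℝ) else 0) := by
      intro w; by_cases hw : w t = ℓ <;> simp [hw]
    simp_rw [this]
    exact Eind1 α hsum t ℓ
  · rw [if_neg e]
    have : ∀ w : Fin n → Fin d,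
        ((if w t = ℓ then (1:ℝ) else 0) * (if w t = m then (1:ℝ) else 0)) = 0 := by
      intro w
      by_cases hw : w t = ℓ
      · have : ¬ (w t = m) := by rw [hw]; exact e
        simp [this]
      · simp [hw]
    simp [this]

lemma M1 {n d : ℕ} (α : Fin d → ℝ) (hsum : ∑ i, α i = 1)
    (h : (Fin n → Fin d) → Fin d → ℕ)
    (hh : ∀ w i, h w i = (Finset.univ.filter (fun t => w t = i)).card) (ℓ : Fin d) :
    ∑ w : Fin n → Fin d, (∏ t, α (w t)) * (h w ℓ : ℝ) = α ℓ * n := by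
  simp_rw [hcastlem h hh, Finset.mul_sum]
  rw [Finset.sum_comm]
  simp_rw [Eind1 α hsum]
  simp [mul_comm]

lemma M2 {n d : ℕ} (α : Fin d → ℝ) (hsum : ∑ i, α i = 1)
    (h : (Fin n → Fin d) → Fin d → ℕ)
    (hh : ∀ w i, h w i = (Finset.univ.filter (fun t => w t = i)).card) (ℓ m : Fin d) :
    ∑ w : Fin n → Fin d, (∏ t, α (w t)) * ((h w ℓ : ℝ) * (h w m : ℝ))
      = α ℓ * α m * ((n:ℝ) * ((n:ℝ) - 1)) + (if ℓ = m then α ℓ * (n:ℝ) else 0) := by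
  have expand : ∀ w : Fin n → Fin d, (∏ t, α (w t)) * ((h w ℓ : ℝ) * (h w m : ℝ))
      = ∑ t : Fin n, ∑ s : Fin n, (∏ u, α (w u)) *
          ((if w t = ℓ then (1:ℝ) else 0) * (if w s = m then (1:ℝ) else 0)) := by
    intro w
    rw [hcastlem h hh w ℓ, hcastlem h hh w m, Finset.sum_mul_sum]
    rw [Finset.mul_sum]
    refine Finset.sum_congr rfl fun t _ => ?_
    rw [Finset.mul_sum]
  simp_rw [expand]
  rw [Finset.sum_comm]
  have inner : ∀ t : Fin n,
      (∑ w : Fin n → Fin d, ∑ s : Fin n, (∏ u, α (w u)) *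
          ((if w t = ℓ then (1:ℝ) else 0) * (if w s = m then (1:ℝ) else 0)))
      = (if ℓ = m then α ℓ else 0) + ((n:ℝ) - 1) * (α ℓ * α m) := by
    intro t
    rw [Finset.sum_comm]
    have Dval : ∀ s : Fin n, (∑ w : Fin n → Fin d, (∏ u, α (w u)) *
          ((if w t = ℓ then (1:ℝ) else 0) * (if w s = m then (1:ℝ) else 0)))
        = if s = t then (if ℓ = m then α ℓ else 0) else α ℓ * α m := by
      intro s
      by_cases es : s = t
      · subst es; rw [if_pos rfl]; exact Eind_diag α hsum s ℓ m
      · rw [if_neg es]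
        exact Eind2 α hsum (fun e => es e.symm) ℓ m
    simp_rw [Dval]
    have split : ∀ s : Fin n, (if s = t then (if ℓ = m then α ℓ else 0) else α ℓ * α m)
        = α ℓ * α m + (if s = t then (if ℓ = m then α ℓ else 0) - α ℓ * α m else 0) := by
      intro s; by_cases es : s = t <;> simp [es]
    simp_rw [split]
    rw [Finset.sum_add_distrib, Finset.sum_const, Finset.sum_ite_eq' Finset.univ t]
    simp [Finset.card_univ]
    ring
  simp_rw [inner]
  rw [Finset.sum_const, Finset.card_univ]
  simp only [Fintype.card_fin, nsmul_eq_mul]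
  by_cases e : ℓ = m <;> simp [e] <;> ring

lemma ML {n d : ℕ} (α : Fin d → ℝ) (hsum : ∑ i, α i = 1) (k : ℕ)
    (h : (Fin n → Fin d) → Fin d → ℕ)
    (hh : ∀ w i, h w i = (Finset.univ.filter (fun t => w t = i)).card) (ℓ : Fin d) :
    ∑ w : Fin n → Fin d, (∏ t, α (w t)) * ((h w ℓ : ℝ) *
        ((∑ i : Fin d, if (i : ℕ) < k then (h w i : ℝ) else 0)
          - (∑ i : Fin d, if (i : ℕ) < k then α i else 0) * n))
      = α ℓ * n * ((if (ℓ : ℕ) < k then (1:ℝ) else 0)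
          - (∑ i : Fin d, if (i : ℕ) < k then α i else 0)) := by
  set A : ℝ := ∑ i : Fin d, if (i : ℕ) < k then α i else 0 with hA
  have expand : ∀ w : Fin n → Fin d,
      (∏ t, α (w t)) * ((h w ℓ : ℝ) *
        ((∑ i : Fin d, if (i : ℕ) < k then (h w i : ℝ) else 0) - A * n))
      = (∑ i : Fin d, if (i : ℕ) < k then
            (∏ t, α (w t)) * ((h w ℓ : ℝ) * (h w i : ℝ)) else 0)
        - A * n * ((∏ t, α (w t)) * (h w ℓ : ℝ)) := by
    intro w
    rw [mul_sub, mul_sub]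
    congr 1
    · rw [Finset.mul_sum, Finset.mul_sum]
      refine Finset.sum_congr rfl fun i _ => ?_
      by_cases c : (i : ℕ) < k <;> simp [c] <;> ring
    · ring
  simp_rw [expand]
  rw [Finset.sum_sub_distrib, Finset.sum_comm, ← Finset.mul_sum, M1 α hsum h hh]
  have step1 : ∀ i : Fin d,
      (∑ w : Fin n → Fin d, if (i : ℕ) < k then
          (∏ t, α (w t)) * ((h w ℓ : ℝ) * (h w i : ℝ)) else 0)
      = if (i : ℕ) < k then
          α ℓ * α i * ((n:ℝ) * ((n:ℝ) - 1)) + (if ℓ = i then α ℓ * (n:ℝ) else 0) else 0 := by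
    intro i
    by_cases c : (i : ℕ) < k
    · simp only [c, if_true]; exact M2 α hsum h hh ℓ i
    · simp [c]
  simp_rw [step1]
  have step2 : ∀ i : Fin d,
      (if (i : ℕ) < k then
          α ℓ * α i * ((n:ℝ) * ((n:ℝ) - 1)) + (if ℓ = i then α ℓ * (n:ℝ) else 0) else 0)
      = (α ℓ * ((n:ℝ) * ((n:ℝ) - 1))) * (if (i : ℕ) < k then α i else 0)
        + (if ℓ = i then (if (ℓ : ℕ) < k then α ℓ * (n:ℝ) else 0) else 0) := by
    intro i
    by_cases e : ℓ = i
    · subst e; by_cases c : (ℓ : ℕ) < k <;> simp [c] <;> ring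
    · by_cases c : (i : ℕ) < k <;> simp [c, e] <;> ring
  simp_rw [step2]
  rw [Finset.sum_add_distrib, ← Finset.mul_sum, ← hA, Finset.sum_ite_eq]
  simp only [Finset.mem_univ, if_true]
  by_cases c : (ℓ : ℕ) < k <;> simp [c] <;> ring


/-- Exact expectation under the modified multinomial density: for a strictly
decreasing positive probability distribution `α` on `Fin d`, `k ∈ [d]`, and
`h ∼ Multinomial(n, α)` (realized as the histogram of an i.i.d. `α`-random word),
with `f(h) = 1 + Σ_{i<j} (α_j/(αᵢ−α_j))(hᵢ/(αᵢn) − h_j/(α_jn))`,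
`𝔼[f(h)·(h₁+⋯+h_k − (α₁+⋯+α_k)n)] = Σ_{i ≤ k < j} α_j/(αᵢ−α_j)`. -/
theorem stmt7 {d : ℕ} (α : Fin d → ℝ)
    (hpos : ∀ i, 0 < α i)
    (hsorted : ∀ i j : Fin d, i < j → α j < α i)
    (hsum : ∑ i, α i = 1)
    (k : ℕ) (hk1 : 1 ≤ k) (hkd : k ≤ d) (n : ℕ) (hn : 1 ≤ n)
    (h : (Fin n → Fin d) → Fin d → ℕ)
    (hh : ∀ w i, h w i = (Finset.univ.filter (fun t => w t = i)).card)
    (f : (Fin n → Fin d) → ℝ)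
    (hf : ∀ w, f w = 1 + ∑ i : Fin d, ∑ j : Fin d,
        if i < j then
          (α j / (α i - α j)) * ((h w i : ℝ) / (α i * n) - (h w j : ℝ) / (α j * n))
        else 0) :
    ∑ w : Fin n → Fin d, (∏ t, α (w t)) *
        (f w * ((∑ i : Fin d, if (i : ℕ) < k then (h w i : ℝ) else 0)
          - (∑ i : Fin d, if (i : ℕ) < k then α i else 0) * n))
      = ∑ i : Fin d, ∑ j : Fin d,
          if (i : ℕ) < k ∧ k ≤ (j : ℕ) then α j / (α i - α j) else 0 := by
  have hn' : (0:ℝ) < n := by exact_mod_cast Nat.lt_of_lt_of_le Nat.zero_lt_one hn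
  have hαn : ∀ ℓ : Fin d, α ℓ * (n:ℝ) ≠ 0 := fun ℓ => ne_of_gt (mul_pos (hpos ℓ) hn')
  set A : ℝ := ∑ i : Fin d, if (i : ℕ) < k then α i else 0 with hA
  set L : (Fin n → Fin d) → ℝ := fun w =>
    (∑ i : Fin d, if (i : ℕ) < k then (h w i : ℝ) else 0) - A * n with hL
  -- normalized mixed moment
  have ML' : ∀ ℓ : Fin d,
      ∑ w : Fin n → Fin d, (∏ t, α (w t)) * (((h w ℓ : ℝ) / (α ℓ * n)) * L w)
        = (if (ℓ : ℕ) < k then (1:ℝ) else 0) - A := by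
    intro ℓ
    have key := ML α hsum k h hh ℓ
    rw [← hA] at key
    have ptw : ∀ w : Fin n → Fin d,
        (∏ t, α (w t)) * (((h w ℓ : ℝ) / (α ℓ * n)) * L w)
          = (α ℓ * (n:ℝ))⁻¹ * ((∏ t, α (w t)) * ((h w ℓ : ℝ) * L w)) := by
      intro w; rw [div_eq_mul_inv]; ring
    simp_rw [ptw]
    rw [← Finset.mul_sum]
    have : (∑ w : Fin n → Fin d, (∏ t, α (w t)) * ((h w ℓ : ℝ) * L w))
        = α ℓ * n * ((if (ℓ : ℕ) < k then (1:ℝ) else 0) - A) := key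
    rw [this, ← mul_assoc, inv_mul_cancel₀ (hαn ℓ), one_mul]
  -- E[L] = 0
  have EL : ∑ w : Fin n → Fin d, (∏ t, α (w t)) * L w = 0 := by
    have ptw : ∀ w : Fin n → Fin d, (∏ t, α (w t)) * L w
        = (∑ i : Fin d, if (i : ℕ) < k then (∏ t, α (w t)) * (h w i : ℝ) else 0)
          - A * n * (∏ t, α (w t)) := by
      intro w
      rw [hL]
      simp only []
      rw [mul_sub]
      congr 1
      · rw [Finset.mul_sum]
        exact Finset.sum_congr rfl fun i _ => by by_cases c : (i:ℕ) < k <;> simp [c]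
      · ring
    simp_rw [ptw]
    rw [Finset.sum_sub_distrib, Finset.sum_comm, ← Finset.mul_sum, E0 α hsum, mul_one]
    have step : ∀ i : Fin d,
        (∑ w : Fin n → Fin d, if (i : ℕ) < k then (∏ t, α (w t)) * (h w i : ℝ) else 0)
          = (n:ℝ) * (if (i : ℕ) < k then α i else 0) := by
      intro i
      by_cases c : (i:ℕ) < k
      · simp only [c, if_true]; rw [M1 α hsum h hh]; ring
      · simp [c]
    simp_rw [step]
    rw [← Finset.mul_sum, ← hA]
    ring
  -- main expansion
  have expandMain : ∀ w : Fin n → Fin d,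
      (∏ t, α (w t)) * (f w * L w)
        = (∏ t, α (w t)) * L w
          + ∑ i : Fin d, ∑ j : Fin d, (if i < j then
              (α j / (α i - α j)) *
                ((∏ t, α (w t)) * (((h w i : ℝ) / (α i * n)) * L w)
                  - (∏ t, α (w t)) * (((h w j : ℝ) / (α j * n)) * L w)) else 0) := by
    intro w
    rw [hf w, add_mul, one_mul, mul_add]
    congr 1
    rw [Finset.sum_mul, Finset.mul_sum]
    refine Finset.sum_congr rfl fun i _ => ?_
    rw [Finset.sum_mul, Finset.mul_sum]
    refine Finset.sum_congr rfl fun j _ => ?_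
    by_cases c : i < j
    · simp only [c, if_true]; ring
    · simp [c]
  calc ∑ w : Fin n → Fin d, (∏ t, α (w t)) * (f w * L w)
      = ∑ w : Fin n → Fin d, ((∏ t, α (w t)) * L w
          + ∑ i : Fin d, ∑ j : Fin d, (if i < j then
              (α j / (α i - α j)) *
                ((∏ t, α (w t)) * (((h w i : ℝ) / (α i * n)) * L w)
                  - (∏ t, α (w t)) * (((h w j : ℝ) / (α j * n)) * L w)) else 0)) :=
        Finset.sum_congr rfl fun w _ => expandMain w
    _ = ∑ i : Fin d, ∑ j : Fin d, ∑ w : Fin n → Fin d, (if i < j then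
              (α j / (α i - α j)) *
                ((∏ t, α (w t)) * (((h w i : ℝ) / (α i * n)) * L w)
                  - (∏ t, α (w t)) * (((h w j : ℝ) / (α j * n)) * L w)) else 0) := by
        rw [Finset.sum_add_distrib, EL, zero_add, Finset.sum_comm]
        exact Finset.sum_congr rfl fun i _ => Finset.sum_comm
    _ = ∑ i : Fin d, ∑ j : Fin d, (if i < j then
          (α j / (α i - α j)) *
            ((if (i : ℕ) < k then (1:ℝ) else 0) - (if (j : ℕ) < k then (1:ℝ) else 0))
          else 0) := by
        refine Finset.sum_congr rfl fun i _ => Finset.sum_congr rfl fun j _ => ?_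
        by_cases c : i < j
        · simp only [c, if_true]
          rw [← Finset.mul_sum, Finset.sum_sub_distrib, ML' i, ML' j]
          ring
        · simp [c]
    _ = ∑ i : Fin d, ∑ j : Fin d,
          if (i : ℕ) < k ∧ k ≤ (j : ℕ) then α j / (α i - α j) else 0 := by
        refine Finset.sum_congr rfl fun i _ => Finset.sum_congr rfl fun j _ => ?_
        by_cases c : i < j
        · have cval : (i:ℕ) < (j:ℕ) := c
          by_cases ci : (i:ℕ) < k
          · by_cases cj : (j:ℕ) < k
            · have h2 : ¬ (k ≤ (j:ℕ)) := by omega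
              simp [c, ci, cj, h2]
            · have : (i:ℕ) < k ∧ k ≤ (j:ℕ) := ⟨ci, by omega⟩
              simp [c, ci, cj, this]
          · have cj : ¬ ((j:ℕ) < k) := by omega
            have : ¬ ((i:ℕ) < k ∧ k ≤ (j:ℕ)) := by omega
            simp [c, ci, cj, this]
        · have : ¬ ((i:ℕ) < k ∧ k ≤ (j:ℕ)) := by
            rintro ⟨a, b⟩
            exact c (Fin.lt_def.mpr (by omega))
          simp [c, this]
end

section
/- Let α be a probability distribution on [d] with α₁ ≥ ⋯ ≥ α_d and fix k ∈ [d]. For w drawn as an i.i.d. α-random word of length n, let E_n = E[G_k(w) − (α₁+⋯+α_k)n], where G_k(w) is the maximum total length of a union of k disjoint weakly increasing subsequences of w. Then E_n is a nondecreasing function of n. -/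
def GkSet {n d : ℕ} (w : Fin n → Fin d) (k : ℕ) : Set ℕ :=
  {m | ∃ S : Fin k → Finset (Fin n),
    (∀ i j, i ≠ j → Disjoint (S i) (S j)) ∧
    (∀ i, ∀ a ∈ S i, ∀ b ∈ S i, a ≤ b → w a ≤ w b) ∧
    m = ∑ i, (S i).card}

lemma Gk_eq_sSup {n d : ℕ} (w : Fin n → Fin d) (k : ℕ) : Gk w k = sSup (GkSet w k) := rfl

lemma GkSet_le {n d k : ℕ} {w : Fin n → Fin d} {m : ℕ} (hm : m ∈ GkSet w k) : m ≤ n := by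
  obtain ⟨S, hdisj, -, rfl⟩ := hm
  rw [← Finset.card_biUnion (fun i _ j _ hij => hdisj i j hij)]
  calc (Finset.univ.biUnion S).card ≤ (Finset.univ : Finset (Fin n)).card :=
        Finset.card_le_card (Finset.subset_univ _)
    _ = n := by simp

lemma GkSet_bdd {n d k : ℕ} (w : Fin n → Fin d) : BddAbove (GkSet w k) :=
  ⟨n, fun _ hm => GkSet_le hm⟩

lemma GkSet_zero_mem {n d k : ℕ} (w : Fin n → Fin d) : 0 ∈ GkSet w k :=
  ⟨fun _ => ∅, by simp, by simp, by simp⟩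

lemma le_Gk {n d k : ℕ} {w : Fin n → Fin d} {m : ℕ} (hm : m ∈ GkSet w k) : m ≤ Gk w k :=
  le_csSup (GkSet_bdd w) hm

lemma Gk_mem {n d k : ℕ} (w : Fin n → Fin d) : Gk w k ∈ GkSet w k :=
  Nat.sSup_mem ⟨0, GkSet_zero_mem w⟩ (GkSet_bdd w)

lemma Gk_le_cons {n d k : ℕ} (w : Fin n → Fin d) (x : Fin d) :
    Gk w k ≤ Gk (Fin.cons x w) k := by
  obtain ⟨S, hdisj, hchain, hm⟩ := Gk_mem (k := k) w
  apply le_Gk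
  refine ⟨fun i => (S i).map ⟨Fin.succ, Fin.succ_injective n⟩, ?_, ?_, ?_⟩
  · intro i j hij
    exact (Finset.disjoint_map _).mpr (hdisj i j hij)
  · intro i a ha b hb hab
    obtain ⟨a', ha', rfl⟩ := Finset.mem_map.mp ha
    obtain ⟨b', hb', rfl⟩ := Finset.mem_map.mp hb
    simp only [Function.Embedding.coeFn_mk] at hab ⊢
    rw [Fin.cons_succ, Fin.cons_succ]
    exact hchain i a' ha' b' hb' (by exact_mod_cast Fin.succ_le_succ_iff.mp hab)
  · simpa using hm

lemma Gk_cons_succ {n d k : ℕ} (w : Fin n → Fin d) (x : Fin d) (hx : (x : ℕ) < k) :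
    Gk w k + 1 ≤ Gk (Fin.cons x w) k := by
  classical
  obtain ⟨S, hdisj, hchain, hm⟩ := Gk_mem (k := k) w
  set v : Fin (n + 1) → Fin d := Fin.cons x w with hv
  set emb : Fin n ↪ Fin (n + 1) := ⟨Fin.succ, Fin.succ_injective n⟩ with hemb
  set B : Finset (Fin (n + 1)) := Finset.univ.biUnion (fun i => (S i).map emb) with hB
  set U : Finset (Fin (n + 1)) := insert 0 B with hU
  have h0B : (0 : Fin (n + 1)) ∉ B := by
    intro h
    obtain ⟨i, -, hi⟩ := Finset.mem_biUnion.mp h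
    obtain ⟨a, -, ha⟩ := Finset.mem_map.mp hi
    exact Fin.succ_ne_zero a ha
  have hUcard : U.card = (∑ i, (S i).card) + 1 := by
    rw [hU, Finset.card_insert_of_notMem h0B, hB,
      Finset.card_biUnion (fun i _ j _ hij => (Finset.disjoint_map _).mpr (hdisj i j hij))]
    simp
  -- antichain bound
  have hAC : ∀ D : Finset (Fin (n + 1)), D ⊆ U →
      (∀ a ∈ D, ∀ b ∈ D, a < b → v b < v a) → D.card ≤ k := by
    intro D hDU hD
    by_cases h0 : (0 : Fin (n + 1)) ∈ D
    · -- values are distinct and all ≤ x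
      have hval : ∀ q ∈ D, (v q : ℕ) ∈ Finset.range ((x : ℕ) + 1) := by
        intro q hq
        rcases eq_or_ne q 0 with rfl | hq0
        · simp [hv]
        · have h0q : (0 : Fin (n + 1)) < q := Fin.pos_of_ne_zero hq0
          have h1 : v q < x := by
            have := hD 0 h0 q hq h0q
            simpa [hv] using this
          have := Fin.lt_def.mp h1
          simp only [Finset.mem_range]
          omega
      have hinj : Set.InjOn (fun q => ((v q : ℕ))) D := by
        intro a ha b hb hab
        simp only at hab
        by_contra hne
        rcases lt_or_gt_of_ne hne with h | h
        · have := Fin.lt_def.mp (hD a ha b hb h); omega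
        · have := Fin.lt_def.mp (hD b hb a ha h); omega
      calc D.card ≤ (Finset.range ((x : ℕ) + 1)).card :=
            Finset.card_le_card_of_injOn _ hval hinj
        _ ≤ k := by simpa using hx
    · -- every element lies in some chain, at most once per chain
      have hk0 : 0 < k := by omega
      have hmem : ∀ q ∈ D, ∃ i : Fin k, q ∈ (S i).map emb := by
        intro q hq
        have := hDU hq
        rw [hU, Finset.mem_insert] at this
        rcases this with rfl | hqB
        · exact absurd hq h0
        · obtain ⟨i, -, hi⟩ := Finset.mem_biUnion.mp hqB
          exact ⟨i, hi⟩
      set f : Fin (n + 1) → Fin k := fun q =>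
        if h : ∃ i : Fin k, q ∈ (S i).map emb then h.choose else ⟨0, hk0⟩ with hf
      have hfspec : ∀ q ∈ D, q ∈ (S (f q)).map emb := by
        intro q hq
        have h := hmem q hq
        simp only [hf, dif_pos h]
        exact h.choose_spec
      have hne : ∀ a ∈ D, ∀ b ∈ D, a < b → f a ≠ f b := by
        intro a ha b hb hab hfab
        obtain ⟨a', ha', rfl⟩ := Finset.mem_map.mp (hfspec a ha)
        obtain ⟨b', hb', rfl⟩ := Finset.mem_map.mp (hfspec b hb)
        rw [hfab] at ha'
        have hab' : a' ≤ b' := by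
          have : (emb a' : Fin (n+1)) ≤ emb b' := le_of_lt hab
          simpa [hemb, Fin.succ_le_succ_iff] using this
        have h1 : v (emb a') ≤ v (emb b') := by
          simpa [hv, hemb, Fin.cons_succ] using hchain _ a' ha' b' hb' hab'
        exact absurd h1 (not_le.mpr (hD _ ha _ hb hab))
      have hinj : Set.InjOn f D := by
        intro a ha b hb hab
        by_contra hne'
        rcases lt_or_gt_of_ne hne' with h | h
        · exact hne a ha b hb h hab
        · exact hne b hb a ha h hab.symm
      calc D.card ≤ (Finset.univ : Finset (Fin k)).card :=
            Finset.card_le_card_of_injOn f (fun a _ => Finset.mem_univ _) hinj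
        _ = k := by simp
  -- longest antichain ending at p
  set A : Fin (n + 1) → Finset (Finset (Fin (n + 1))) := fun p =>
    U.powerset.filter (fun D => p ∈ D ∧ (∀ a ∈ D, a ≤ p) ∧
      (∀ a ∈ D, ∀ b ∈ D, a < b → v b < v a)) with hA
  set g : Fin (n + 1) → ℕ := fun p => (A p).sup Finset.card with hg
  have hsingle : ∀ p ∈ U, {p} ∈ A p := by
    intro p hp
    rw [hA, Finset.mem_filter, Finset.mem_powerset]
    refine ⟨Finset.singleton_subset_iff.mpr hp, Finset.mem_singleton_self p,
      fun a ha => le_of_eq (Finset.mem_singleton.mp ha), fun a ha b hb hab => ?_⟩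
    rw [Finset.mem_singleton.mp ha, Finset.mem_singleton.mp hb] at hab
    exact absurd hab (lt_irrefl _)
  have hg1 : ∀ p ∈ U, 1 ≤ g p := by
    intro p hp
    have := Finset.le_sup (f := Finset.card) (hsingle p hp)
    rw [Finset.card_singleton] at this
    exact this
  have hgk : ∀ p, g p ≤ k := by
    intro p
    apply Finset.sup_le
    intro D hD
    rw [hA, Finset.mem_filter, Finset.mem_powerset] at hD
    exact hAC D hD.1 hD.2.2.2
  have hmono : ∀ p ∈ U, ∀ q ∈ U, p < q → v q < v p → g p < g q := by
    intro p hp q hq hpq hvqp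
    obtain ⟨D, hDA, hDcard⟩ := Finset.exists_mem_eq_sup (A p) ⟨{p}, hsingle p hp⟩ Finset.card
    rw [hA, Finset.mem_filter, Finset.mem_powerset] at hDA
    obtain ⟨hDU, hpD, hle, hanti⟩ := hDA
    have hqD : q ∉ D := fun h => absurd (hle q h) (not_le.mpr hpq)
    have hins : insert q D ∈ A q := by
      rw [hA]
      simp only [Finset.mem_filter, Finset.mem_powerset]
      refine ⟨Finset.insert_subset hq hDU, Finset.mem_insert_self _ _, ?_, ?_⟩
      · intro a ha
        rcases Finset.mem_insert.mp ha with rfl | ha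
        · exact le_refl _
        · exact le_of_lt (lt_of_le_of_lt (hle a ha) hpq)
      · intro a ha b hb hab
        rcases Finset.mem_insert.mp ha with rfl | ha'
        · rcases Finset.mem_insert.mp hb with rfl | hb'
          · exact absurd hab (lt_irrefl _)
          · exact absurd hab (not_lt.mpr (le_of_lt (lt_of_le_of_lt (hle b hb') hpq)))
        · rcases Finset.mem_insert.mp hb with rfl | hb'
          · rcases eq_or_lt_of_le (hle a ha') with rfl | hap
            · exact hvqp
            · exact lt_trans hvqp (hanti a ha' p hpD hap)
          · exact hanti a ha' b hb' hab
    have := Finset.le_sup (f := Finset.card) hins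
    rw [Finset.card_insert_of_notMem hqD] at this
    have hgoal : (A p).sup Finset.card < (A q).sup Finset.card := by omega
    exact hgoal
  -- level sets
  set T : Fin k → Finset (Fin (n + 1)) := fun i => U.filter (fun p => g p = (i : ℕ) + 1) with hT
  have hTdisj : ∀ i j, i ≠ j → Disjoint (T i) (T j) := by
    intro i j hij
    rw [Finset.disjoint_left]
    intro p hpi hpj
    rw [hT, Finset.mem_filter] at hpi hpj
    exact hij (Fin.ext (by omega))
  have hTchain : ∀ i, ∀ a ∈ T i, ∀ b ∈ T i, a ≤ b → v a ≤ v b := by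
    intro i a ha b hb hab
    rw [hT, Finset.mem_filter] at ha hb
    rcases eq_or_lt_of_le hab with rfl | hab'
    · exact le_refl _
    · by_contra hcon
      have := hmono a ha.1 b hb.1 hab' (not_le.mp hcon)
      omega
  have hTsum : ∑ i, (T i).card = U.card := by
    rw [← Finset.card_biUnion (fun i _ j _ hij => hTdisj i j hij)]
    congr 1
    ext p
    simp only [Finset.mem_biUnion, Finset.mem_univ, true_and, hT, Finset.mem_filter]
    constructor
    · rintro ⟨i, hp, -⟩; exact hp
    · intro hp
      have h1 := hg1 p hp
      have h2 := hgk p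
      exact ⟨⟨g p - 1, by omega⟩, hp, by simp; omega⟩
  apply le_Gk
  exact ⟨T, hTdisj, hTchain, by rw [hTsum, hUcard, hm]⟩


/-- For a sorted probability distribution `α` on `[d]` and `k ∈ [d]`, the excess
`E n = 𝔼[G_k(w) − (α₁+⋯+α_k) n]` over an i.i.d. `α`-random word of length `n`
is a nondecreasing function of `n`. -/
theorem stmt8 {d : ℕ} (α : Fin d → ℝ) (k : ℕ) (hk1 : 1 ≤ k) (hkd : k ≤ d)
    (hnonneg : ∀ i, 0 ≤ α i) (hsum : ∑ i, α i = 1)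
    (hsorted : ∀ i j : Fin d, i ≤ j → α j ≤ α i)
    (E : ℕ → ℝ)
    (hE : ∀ n : ℕ, E n = ∑ w : Fin n → Fin d, (∏ t, α (w t)) *
        ((Gk w k : ℝ) - (∑ i : Fin d, if (i : ℕ) < k then α i else 0) * n)) :
    Monotone E := by
  apply monotone_nat_of_le_succ
  intro n
  rw [hE n, hE (n + 1)]
  set β : ℝ := ∑ i : Fin d, if (i : ℕ) < k then α i else 0 with hβ
  have hprod : ∀ (x : Fin d) (w : Fin n → Fin d),
      (∏ t : Fin (n + 1), α ((Fin.cons x w : Fin (n + 1) → Fin d) t)) = α x * ∏ t, α (w t) := by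
    intro x w
    rw [Fin.prod_univ_succ]
    simp
  have hre : (∑ w' : Fin (n + 1) → Fin d,
        (∏ t, α (w' t)) * ((Gk w' k : ℝ) - β * ((n : ℕ) + 1 : ℕ)))
      = ∑ w : Fin n → Fin d, ∑ x : Fin d,
          α x * ((∏ t, α (w t)) * ((Gk (Fin.cons x w) k : ℝ) - β * ((n : ℕ) + 1 : ℕ))) := by
    rw [← (Fin.consEquiv (fun _ : Fin (n + 1) => Fin d)).sum_comp
        (fun w' => (∏ t, α (w' t)) * ((Gk w' k : ℝ) - β * ((n : ℕ) + 1 : ℕ)))]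
    rw [Fintype.sum_prod_type, Finset.sum_comm]
    refine Finset.sum_congr rfl (fun w _ => Finset.sum_congr rfl (fun x _ => ?_))
    show (∏ t, α ((Fin.cons x w : Fin (n + 1) → Fin d) t)) *
        ((Gk (Fin.cons x w : Fin (n + 1) → Fin d) k : ℝ) - β * ((n : ℕ) + 1 : ℕ)) = _
    rw [hprod]
    ring
  rw [hre]
  apply Finset.sum_le_sum
  intro w _
  have hP0 : (0 : ℝ) ≤ ∏ t, α (w t) := Finset.prod_nonneg (fun t _ => hnonneg _)
  have hrw : ∑ x : Fin d,
      α x * ((∏ t, α (w t)) * ((Gk (Fin.cons x w) k : ℝ) - β * ((n : ℕ) + 1 : ℕ)))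
      = (∏ t, α (w t)) * ∑ x : Fin d,
          α x * ((Gk (Fin.cons x w) k : ℝ) - β * ((n : ℕ) + 1 : ℕ)) := by
    rw [Finset.mul_sum]
    exact Finset.sum_congr rfl (fun x _ => by ring)
  rw [hrw]
  apply mul_le_mul_of_nonneg_left _ hP0
  -- inner inequality
  have key : ∀ x : Fin d, α x * (Gk w k : ℝ) + (if (x : ℕ) < k then α x else 0)
      ≤ α x * (Gk (Fin.cons x w) k : ℝ) := by
    intro x
    by_cases hxk : (x : ℕ) < k
    · rw [if_pos hxk]
      have h : (Gk w k : ℝ) + 1 ≤ (Gk (Fin.cons x w) k : ℝ) := by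
        exact_mod_cast Gk_cons_succ w x hxk
      nlinarith [hnonneg x]
    · rw [if_neg hxk]
      have h : (Gk w k : ℝ) ≤ (Gk (Fin.cons x w) k : ℝ) := by
        exact_mod_cast Gk_le_cons (k := k) w x
      nlinarith [hnonneg x]
  have hsumkey := Finset.sum_le_sum (fun x (_ : x ∈ Finset.univ) => key x)
  rw [Finset.sum_add_distrib, ← Finset.sum_mul, hsum, one_mul, ← hβ] at hsumkey
  have hexp : ∑ x : Fin d, α x * ((Gk (Fin.cons x w) k : ℝ) - β * ((n : ℕ) + 1 : ℕ))
      = (∑ x : Fin d, α x * (Gk (Fin.cons x w) k : ℝ)) - β * ((n : ℕ) + 1 : ℕ) := by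
    simp only [mul_sub]
    rw [Finset.sum_sub_distrib, ← Finset.sum_mul, hsum, one_mul]
  rw [hexp]
  push_cast
  linarith [hsumkey]
end

section
/- Let α₁ ≥ ⋯ ≥ α_k > ζ ≥ α_{k+1} ≥ ⋯ ≥ α_d ≥ 0 (with k < d and ζ > 0), and let β be a permutation of α. Define α'ᵢ = αᵢ for i ≤ k and α'_{k+1} = ζ, and let L = min{k, ln(α₁/ζ)}. Then Σ_{i=1}^d (√αᵢ − √βᵢ)² ≤ 4 Σ_{j=1}^{k} ((α'_j − α'_{j+1})/α'_j) Σ_{i=1}^{j}(αᵢ − βᵢ) + dζ + 8kLζ. -/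
open Finset Real

private lemma aux_sum_le_sum_of_card {ι : Type*} [DecidableEq ι] (A B : Finset ι) (v : ι → ℝ)
    (t : ℝ) (hcard : A.card = B.card)
    (hA : ∀ a ∈ A, a ∉ B → v a ≤ t) (hB : ∀ b ∈ B, b ∉ A → t ≤ v b) :
    ∑ a ∈ A, v a ≤ ∑ b ∈ B, v b := by
  have h1 := Finset.sum_inter_add_sum_sdiff A B v
  have h2 := Finset.sum_inter_add_sum_sdiff B A v
  have hc1 := Finset.card_sdiff_add_card_inter A B
  have hc2 := Finset.card_sdiff_add_card_inter B A
  have hAB : ∑ a ∈ A \ B, v a ≤ (A \ B).card * t := by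
    calc ∑ a ∈ A \ B, v a ≤ ∑ _a ∈ A \ B, t :=
      Finset.sum_le_sum (fun a ha => hA a (Finset.mem_sdiff.mp ha).1 (Finset.mem_sdiff.mp ha).2)
    _ = (A \ B).card * t := by rw [Finset.sum_const, nsmul_eq_mul]
  have hBA : ((B \ A).card : ℝ) * t ≤ ∑ b ∈ B \ A, v b := by
    calc ((B \ A).card : ℝ) * t = ∑ _b ∈ B \ A, t := by rw [Finset.sum_const, nsmul_eq_mul]
    _ ≤ ∑ b ∈ B \ A, v b :=
      Finset.sum_le_sum (fun b hb => hB b (Finset.mem_sdiff.mp hb).1 (Finset.mem_sdiff.mp hb).2)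
  have hcc : (A \ B).card = (B \ A).card := by
    rw [Finset.inter_comm] at hc2; omega
  rw [← h1, ← h2, Finset.inter_comm B A]
  rw [hcc] at hAB
  linarith

private lemma range_eq_filter_sum {d n : ℕ} (hn : n ≤ d) (f : ℕ → ℝ) :
    ∑ i ∈ Finset.range n, f i
      = ∑ i ∈ Finset.univ.filter (fun i : Fin d => (i : ℕ) < n), f (i : ℕ) := by
  rw [Finset.sum_filter, Fin.sum_univ_eq_sum_range (fun i => if i < n then f i else 0) d,
    ← Finset.sum_filter]
  congr 1
  ext m
  simp only [Finset.mem_filter, Finset.mem_range]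
  omega

private lemma perm_prefix_le {d n : ℕ} (hn : n ≤ d) (σ : Equiv.Perm (Fin d)) (v b : ℕ → ℝ)
    (hb : ∀ i : Fin d, b (i : ℕ) = v ((σ i : Fin d) : ℕ)) (t : ℝ)
    (h1 : ∀ m, m < n → t ≤ v m) (h2 : ∀ m, n ≤ m → m < d → v m ≤ t) :
    ∑ i ∈ Finset.range n, b i ≤ ∑ i ∈ Finset.range n, v i := by
  classical
  set P : Finset (Fin d) := Finset.univ.filter (fun i : Fin d => (i : ℕ) < n) with hP
  have hbsum : ∑ i ∈ Finset.range n, b i = ∑ m ∈ P.image σ, v (m : ℕ) := by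
    rw [range_eq_filter_sum hn b,
      Finset.sum_image (fun x _ y _ h => σ.injective h)]
    exact Finset.sum_congr rfl (fun i _ => hb i)
  rw [hbsum, range_eq_filter_sum hn v]
  apply aux_sum_le_sum_of_card _ _ _ t
  · rw [Finset.card_image_of_injective _ σ.injective]
  · intro a ha hna
    have : ¬ ((a : ℕ) < n) := by simpa [hP] using hna
    exact h2 a (le_of_not_gt this) a.isLt
  · intro m hm _
    exact h1 m (by simpa [hP] using hm)

private lemma g_lower {c x : ℝ} (hc : 0 ≤ c) (hx : c ≤ x) :
    c / 4 ≤ (Real.sqrt x - Real.sqrt c / 2) ^ 2 := by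
  have h1 : Real.sqrt c ≤ Real.sqrt x := Real.sqrt_le_sqrt hx
  have h2 : Real.sqrt c ^ 2 = c := Real.sq_sqrt hc
  have h3 : 0 ≤ Real.sqrt c := Real.sqrt_nonneg c
  nlinarith [Real.sqrt_nonneg x]

private lemma g_upper {c x : ℝ} (hx : 0 ≤ x) (hxc : x ≤ c) :
    (Real.sqrt x - Real.sqrt c / 2) ^ 2 ≤ c / 4 := by
  have h1 : Real.sqrt x ≤ Real.sqrt c := Real.sqrt_le_sqrt hxc
  have h2 : Real.sqrt c ^ 2 = c := Real.sq_sqrt (hx.trans hxc)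
  have h4 : Real.sqrt x ^ 2 = x := Real.sq_sqrt hx
  have h3 : 0 ≤ Real.sqrt x := Real.sqrt_nonneg x
  nlinarith

private lemma mixed_core {ζ a b T : ℝ} (hζ : 0 < ζ) (hb : 0 ≤ b) (hbζ : b ≤ ζ) (hζa : ζ < a)
    (haT : a ≤ T) :
    (Real.sqrt a - Real.sqrt b) ^ 2 ≤ 2 * (Real.sqrt a - Real.sqrt ζ) ^ 2 + ζ
      + min ζ (2 * Real.sqrt ζ * (Real.sqrt T - Real.sqrt ζ)) := by
  set x := Real.sqrt a - Real.sqrt ζ with hxdef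
  set y := Real.sqrt ζ - Real.sqrt b with hydef
  have hζs : Real.sqrt ζ ^ 2 = ζ := Real.sq_sqrt hζ.le
  have hx0 : 0 ≤ x := sub_nonneg.mpr (Real.sqrt_le_sqrt hζa.le)
  have hy0 : 0 ≤ y := sub_nonneg.mpr (Real.sqrt_le_sqrt hbζ)
  have hyζ : y ≤ Real.sqrt ζ := sub_le_self _ (Real.sqrt_nonneg b)
  have hxT : x ≤ Real.sqrt T - Real.sqrt ζ := sub_le_sub_right (Real.sqrt_le_sqrt haT) _
  have hab : Real.sqrt a - Real.sqrt b = x + y := by ring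
  rw [hab]
  rcases le_total ζ (2 * Real.sqrt ζ * (Real.sqrt T - Real.sqrt ζ)) with h | h
  · rw [min_eq_left h]
    nlinarith [sq_nonneg (x - y)]
  · rw [min_eq_right h]
    have hsζ : 0 ≤ Real.sqrt ζ := Real.sqrt_nonneg ζ
    nlinarith [mul_le_mul_of_nonneg_left hxT (mul_nonneg (by norm_num : (0:ℝ) ≤ 2) hsζ),
      mul_le_mul_of_nonneg_right hyζ hx0]

private lemma trunc_pt {ζ a b T : ℝ} (hζ : 0 < ζ) (ha : 0 ≤ a) (hb : 0 ≤ b)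
    (haT : a ≤ T) (hbT : b ≤ T) :
    (Real.sqrt a - Real.sqrt b) ^ 2
      ≤ 2 * (Real.sqrt (max a ζ) - Real.sqrt (max b ζ)) ^ 2 + ζ
        + ((if ζ < a then (1:ℝ) else 0) + (if ζ < b then (1:ℝ) else 0))
            * min ζ (2 * Real.sqrt ζ * (Real.sqrt T - Real.sqrt ζ)) := by
  rcases le_or_gt a ζ with haζ | haζ <;> rcases le_or_gt b ζ with hbζ | hbζ
  · -- both small
    rw [if_neg (not_lt.mpr haζ), if_neg (not_lt.mpr hbζ), max_eq_right haζ, max_eq_right hbζ]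
    have h1 : Real.sqrt a ≤ Real.sqrt ζ := Real.sqrt_le_sqrt haζ
    have h2 : Real.sqrt b ≤ Real.sqrt ζ := Real.sqrt_le_sqrt hbζ
    have h3 : (Real.sqrt a - Real.sqrt b) ^ 2 ≤ Real.sqrt ζ ^ 2 := by
      apply sq_le_sq'
      · have := Real.sqrt_nonneg a; linarith
      · have := Real.sqrt_nonneg b; linarith
    have hζs : Real.sqrt ζ ^ 2 = ζ := Real.sq_sqrt hζ.le
    nlinarith [sq_nonneg (Real.sqrt ζ - Real.sqrt ζ)]
  · -- a small, b big : symmetric mixed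
    rw [if_neg (not_lt.mpr haζ), if_pos hbζ, max_eq_right haζ, max_eq_left hbζ.le]
    have := mixed_core hζ ha haζ hbζ hbT
    calc (Real.sqrt a - Real.sqrt b) ^ 2 = (Real.sqrt b - Real.sqrt a) ^ 2 := by ring
    _ ≤ 2 * (Real.sqrt b - Real.sqrt ζ) ^ 2 + ζ
        + min ζ (2 * Real.sqrt ζ * (Real.sqrt T - Real.sqrt ζ)) := this
    _ = 2 * (Real.sqrt ζ - Real.sqrt b) ^ 2 + ζ
        + (0 + 1) * min ζ (2 * Real.sqrt ζ * (Real.sqrt T - Real.sqrt ζ)) := by ring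
  · -- a big, b small : mixed
    rw [if_pos haζ, if_neg (not_lt.mpr hbζ), max_eq_left haζ.le, max_eq_right hbζ]
    have := mixed_core hζ hb hbζ haζ haT
    calc (Real.sqrt a - Real.sqrt b) ^ 2
        ≤ 2 * (Real.sqrt a - Real.sqrt ζ) ^ 2 + ζ
          + min ζ (2 * Real.sqrt ζ * (Real.sqrt T - Real.sqrt ζ)) := this
    _ = 2 * (Real.sqrt a - Real.sqrt ζ) ^ 2 + ζ
        + (1 + 0) * min ζ (2 * Real.sqrt ζ * (Real.sqrt T - Real.sqrt ζ)) := by ring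
  · -- both big
    rw [if_pos haζ, if_pos hbζ, max_eq_left haζ.le, max_eq_left hbζ.le]
    have hm : 0 ≤ min ζ (2 * Real.sqrt ζ * (Real.sqrt T - Real.sqrt ζ)) := by
      apply le_min hζ.le
      have h1 : Real.sqrt ζ ≤ Real.sqrt T := Real.sqrt_le_sqrt (haζ.le.trans haT)
      have h2 : 0 ≤ Real.sqrt ζ := Real.sqrt_nonneg ζ
      nlinarith
    nlinarith [sq_nonneg (Real.sqrt a - Real.sqrt b)]

private lemma M_le_L {ζ T : ℝ} (k : ℕ) (hk : 1 ≤ k) (hζ : 0 < ζ) (hT : ζ < T) :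
    min ζ (2 * Real.sqrt ζ * (Real.sqrt T - Real.sqrt ζ))
      ≤ 4 * min (k : ℝ) (Real.log (T / ζ)) * ζ := by
  have hr1 : 1 < T / ζ := (one_lt_div hζ).2 hT
  have hr0 : 0 < T / ζ := by linarith
  have hlogpos : 0 < Real.log (T / ζ) := Real.log_pos hr1
  have hk1 : (1 : ℝ) ≤ (k : ℝ) := by exact_mod_cast hk
  rcases le_or_gt 1 (Real.log (T / ζ)) with h1 | h1
  · have hmin : (1 : ℝ) ≤ min (k : ℝ) (Real.log (T / ζ)) := le_min hk1 h1
    have : min ζ (2 * Real.sqrt ζ * (Real.sqrt T - Real.sqrt ζ)) ≤ ζ := min_le_left _ _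
    nlinarith
  · have hmin : min (k : ℝ) (Real.log (T / ζ)) = Real.log (T / ζ) :=
      min_eq_right (le_trans h1.le hk1)
    rw [hmin]
    have hr4 : T / ζ < 4 := by
      have h2 : T / ζ = Real.exp (Real.log (T / ζ)) := (Real.exp_log hr0).symm
      have h3 : Real.exp (Real.log (T / ζ)) < Real.exp 1 := Real.exp_lt_exp.2 h1
      have := Real.exp_one_lt_d9
      linarith
    set s := Real.sqrt (T / ζ) with hs
    have hs1 : 1 < s := by
      rw [hs, show (1:ℝ) = Real.sqrt 1 from (Real.sqrt_one).symm]
      exact Real.sqrt_lt_sqrt (by norm_num) hr1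
    have hs2 : s < 2 := by
      rw [hs]
      have : Real.sqrt (T / ζ) < Real.sqrt 4 := Real.sqrt_lt_sqrt hr0.le hr4
      have h4 : Real.sqrt 4 = 2 := by
        rw [show (4:ℝ) = 2^2 by norm_num, Real.sqrt_sq (by norm_num : (0:ℝ) ≤ 2)]
      linarith
    have hlogs : Real.log (T / ζ) = 2 * Real.log s := by
      rw [hs, Real.log_sqrt hr0.le]; ring
    have hls : 1 - s⁻¹ ≤ Real.log s := Real.one_sub_inv_le_log_of_pos (by linarith)
    have h0 : 0 < s := by linarith
    have hsinv : (s - 1) / 2 ≤ 1 - s⁻¹ := by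
      have he : 1 - s⁻¹ = (s - 1) / s := by field_simp
      rw [he, div_le_div_iff₀ (by norm_num : (0:ℝ) < 2) h0]
      nlinarith
    have hsT : Real.sqrt T = Real.sqrt ζ * s := by
      rw [hs, ← Real.sqrt_mul hζ.le]
      congr 1
      field_simp
    have hm2 : min ζ (2 * Real.sqrt ζ * (Real.sqrt T - Real.sqrt ζ))
        ≤ 2 * Real.sqrt ζ * (Real.sqrt T - Real.sqrt ζ) := min_le_right _ _
    have hζs : Real.sqrt ζ * Real.sqrt ζ = ζ := Real.mul_self_sqrt hζ.le
    have heq : 2 * Real.sqrt ζ * (Real.sqrt T - Real.sqrt ζ) = 2 * ζ * (s - 1) := by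
      rw [hsT]; nlinarith [hζs]
    have hlog2 : (s - 1) / 2 ≤ Real.log s := le_trans hsinv hls
    calc min ζ (2 * Real.sqrt ζ * (Real.sqrt T - Real.sqrt ζ))
        ≤ 2 * Real.sqrt ζ * (Real.sqrt T - Real.sqrt ζ) := hm2
    _ = 2 * ζ * (s - 1) := heq
    _ ≤ 4 * Real.log (T / ζ) * ζ := by rw [hlogs]; nlinarith

/-- Truncated rearrangement bound.  Let `α₁ ≥ ⋯ ≥ α_k > ζ ≥ α_{k+1} ≥ ⋯ ≥ α_d ≥ 0`
(0-based indexing), `β` a permutation of `α`, `α'ⱼ = αⱼ` for `j ≤ k` and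
`α'_{k+1} = ζ`, and `L = min{k, ln(α₁/ζ)}`.  Then
`Σ (√αᵢ − √βᵢ)² ≤ 4 Σ_{j≤k} ((α'_j − α'_{j+1})/α'_j) Σ_{i≤j}(αᵢ − βᵢ) + dζ + 8kLζ`. -/
theorem stmt12 {d k : ℕ} (hk : 1 ≤ k) (hkd : k < d) (α β : ℕ → ℝ) (ζ : ℝ) (hζ : 0 < ζ)
    (hnonneg : ∀ i < d, 0 ≤ α i)
    (hsorted : ∀ i j, i ≤ j → j < d → α j ≤ α i)
    (hgt : ζ < α (k - 1)) (hle : α k ≤ ζ)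
    (hperm : ∃ σ : Equiv.Perm (Fin d), ∀ i : Fin d, β (i : ℕ) = α ((σ i : Fin d) : ℕ)) :
    ∑ i ∈ Finset.range d, (Real.sqrt (α i) - Real.sqrt (β i)) ^ 2
      ≤ 4 * ∑ j ∈ Finset.range k,
            (((if j < k then α j else ζ) - (if j + 1 < k then α (j + 1) else ζ))
                / (if j < k then α j else ζ))
              * ∑ i ∈ Finset.range (j + 1), (α i - β i)
        + d * ζ + 8 * k * min (k : ℝ) (Real.log (α 0 / ζ)) * ζ := by
  classical
  obtain ⟨σ, hσ⟩ := hperm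
  set A : ℕ → ℝ := fun i => max (α i) ζ with hAdef
  set B : ℕ → ℝ := fun i => max (β i) ζ with hBdef
  have hk1d : k - 1 < d := by omega
  have hβnn : ∀ i < d, 0 ≤ β i := fun i hi => by
    rw [hσ ⟨i, hi⟩]; exact hnonneg _ (Fin.is_lt _)
  have hβ0 : ∀ i < d, β i ≤ α 0 := fun i hi => by
    rw [hσ ⟨i, hi⟩]; exact hsorted 0 _ (Nat.zero_le _) (Fin.is_lt _)
  have hα0 : ∀ i < d, α i ≤ α 0 := fun i hi => hsorted 0 i (Nat.zero_le _) hi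
  have hζα0 : ζ < α 0 := lt_of_lt_of_le hgt (hsorted 0 (k - 1) (Nat.zero_le _) hk1d)
  have hbig : ∀ m, m < k → ζ < α m := fun m hm =>
    lt_of_lt_of_le hgt (hsorted m (k - 1) (by omega) hk1d)
  have hsmall : ∀ m, k ≤ m → m < d → α m ≤ ζ := fun m h1 h2 => (hsorted k m h1 h2).trans hle
  have hAeq : ∀ m, m < k → A m = α m := fun m hm => max_eq_left (hbig m hm).le
  have hAζ : ∀ m, k ≤ m → m < d → A m = ζ := fun m h1 h2 => max_eq_right (hsmall m h1 h2)
  have hApos : ∀ m, 0 < A m := fun m => lt_of_lt_of_le hζ (le_max_right _ _)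
  have hBpos : ∀ m, 0 < B m := fun m => lt_of_lt_of_le hζ (le_max_right _ _)
  have hAmono : ∀ i j, i ≤ j → j < d → A j ≤ A i := fun i j hij hj =>
    max_le_max (hsorted i j hij hj) le_rfl
  have hBA : ∀ i : Fin d, B (i : ℕ) = A ((σ i : Fin d) : ℕ) := fun i => by
    simp only [hAdef, hBdef, hσ i]
  set M : ℝ := min ζ (2 * Real.sqrt ζ * (Real.sqrt (α 0) - Real.sqrt ζ)) with hMdef
  set L : ℝ := min (k : ℝ) (Real.log (α 0 / ζ)) with hLdef
  -- Step 1 : truncation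
  have hsum_indα : ∑ i ∈ Finset.range d, (if ζ < α i then (1 : ℝ) else 0) = k := by
    have h1 : ∀ i ∈ Finset.range d,
        (if ζ < α i then (1 : ℝ) else 0) = (if i < k then (1 : ℝ) else 0) := by
      intro i hi
      rw [Finset.mem_range] at hi
      by_cases hik : i < k
      · rw [if_pos (hbig i hik), if_pos hik]
      · rw [if_neg (not_lt.mpr (hsmall i (not_lt.mp hik) hi)), if_neg hik]
    rw [Finset.sum_congr rfl h1, Finset.sum_boole]
    have : (Finset.range d).filter (fun i => i < k) = Finset.range k := by
      ext m; simp only [Finset.mem_filter, Finset.mem_range]; omega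
    rw [this, Finset.card_range]
  have hsum_indβ : ∑ i ∈ Finset.range d, (if ζ < β i then (1 : ℝ) else 0) = k := by
    rw [← Fin.sum_univ_eq_sum_range (fun i => if ζ < β i then (1 : ℝ) else 0) d]
    have h1 : ∀ i : Fin d, (if ζ < β (i : ℕ) then (1 : ℝ) else 0)
        = (fun j : Fin d => if ζ < α (j : ℕ) then (1 : ℝ) else 0) (σ i) := fun i => by
      simp only [hσ i]
    rw [Finset.sum_congr rfl (fun i _ => h1 i),
      Equiv.sum_comp σ (fun j : Fin d => if ζ < α (j : ℕ) then (1 : ℝ) else 0),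
      Fin.sum_univ_eq_sum_range (fun i => if ζ < α i then (1 : ℝ) else 0) d]
    exact hsum_indα
  have step1 : ∑ i ∈ Finset.range d, (Real.sqrt (α i) - Real.sqrt (β i)) ^ 2
      ≤ 2 * ∑ i ∈ Finset.range d, (Real.sqrt (A i) - Real.sqrt (B i)) ^ 2
        + d * ζ + (k + k) * M := by
    have hptw : ∀ i ∈ Finset.range d, (Real.sqrt (α i) - Real.sqrt (β i)) ^ 2
        ≤ 2 * (Real.sqrt (A i) - Real.sqrt (B i)) ^ 2 + ζ
          + ((if ζ < α i then (1 : ℝ) else 0) + (if ζ < β i then (1 : ℝ) else 0)) * M := by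
      intro i hi
      rw [Finset.mem_range] at hi
      exact trunc_pt hζ (hnonneg i hi) (hβnn i hi) (hα0 i hi) (hβ0 i hi)
    calc ∑ i ∈ Finset.range d, (Real.sqrt (α i) - Real.sqrt (β i)) ^ 2
        ≤ ∑ i ∈ Finset.range d, (2 * (Real.sqrt (A i) - Real.sqrt (B i)) ^ 2 + ζ
          + ((if ζ < α i then (1 : ℝ) else 0) + (if ζ < β i then (1 : ℝ) else 0)) * M) :=
          Finset.sum_le_sum hptw
    _ = 2 * ∑ i ∈ Finset.range d, (Real.sqrt (A i) - Real.sqrt (B i)) ^ 2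
        + d * ζ + (k + k) * M := by
        rw [Finset.sum_add_distrib, Finset.sum_add_distrib, ← Finset.sum_mul,
          Finset.sum_add_distrib, hsum_indα, hsum_indβ, ← Finset.mul_sum,
          Finset.sum_const, Finset.card_range, nsmul_eq_mul]
  -- Step 2 : identity + Abel
  have hsumAB : ∑ i ∈ Finset.range d, B i = ∑ i ∈ Finset.range d, A i := by
    rw [← Fin.sum_univ_eq_sum_range (fun i => B i) d, ← Fin.sum_univ_eq_sum_range (fun i => A i) d,
      Finset.sum_congr rfl (fun i _ => hBA i)]
    exact Equiv.sum_comp σ (fun j : Fin d => A (j : ℕ))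
  have hsumsq : ∑ i ∈ Finset.range d, Real.sqrt (B i)
      = ∑ i ∈ Finset.range d, Real.sqrt (A i) := by
    calc ∑ i ∈ Finset.range d, Real.sqrt (B i)
        = ∑ i : Fin d, Real.sqrt (B (i : ℕ)) :=
          (Fin.sum_univ_eq_sum_range (fun i => Real.sqrt (B i)) d).symm
      _ = ∑ i : Fin d, Real.sqrt (A ((σ i : Fin d) : ℕ)) :=
          Finset.sum_congr rfl (fun i _ => by rw [hBA i])
      _ = ∑ j : Fin d, Real.sqrt (A (j : ℕ)) :=
          Equiv.sum_comp σ (fun j : Fin d => Real.sqrt (A (j : ℕ)))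
      _ = ∑ i ∈ Finset.range d, Real.sqrt (A i) :=
          Fin.sum_univ_eq_sum_range (fun i => Real.sqrt (A i)) d
  have hGd : ∑ i ∈ Finset.range d, (Real.sqrt (A i) - Real.sqrt (B i)) = 0 := by
    rw [Finset.sum_sub_distrib, hsumsq, sub_self]
  have hiden : ∑ i ∈ Finset.range d, (Real.sqrt (A i) - Real.sqrt (B i)) ^ 2
      = 2 * ∑ i ∈ Finset.range d, Real.sqrt (A i) * (Real.sqrt (A i) - Real.sqrt (B i)) := by
    have hpt : ∀ i ∈ Finset.range d, (Real.sqrt (A i) - Real.sqrt (B i)) ^ 2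
        = 2 * (Real.sqrt (A i) * (Real.sqrt (A i) - Real.sqrt (B i))) - (A i - B i) := by
      intro i _
      have h1 : Real.sqrt (A i) ^ 2 = A i := Real.sq_sqrt (hApos i).le
      have h2 : Real.sqrt (B i) ^ 2 = B i := Real.sq_sqrt (hBpos i).le
      linear_combination - h1 + h2
    rw [Finset.sum_congr rfl hpt, Finset.sum_sub_distrib, Finset.sum_sub_distrib, hsumAB,
      sub_self, sub_zero, ← Finset.mul_sum]
  have habel := Finset.sum_range_by_parts (fun i => Real.sqrt (A i))
    (fun i => Real.sqrt (A i) - Real.sqrt (B i)) d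
  simp only [smul_eq_mul] at habel
  rw [hGd, mul_zero, zero_sub] at habel
  have habel2 : ∑ i ∈ Finset.range d, Real.sqrt (A i) * (Real.sqrt (A i) - Real.sqrt (B i))
      = ∑ i ∈ Finset.range (d - 1), (Real.sqrt (A i) - Real.sqrt (A (i + 1)))
          * ∑ j ∈ Finset.range (i + 1), (Real.sqrt (A j) - Real.sqrt (B j)) := by
    rw [habel, ← Finset.sum_neg_distrib]
    exact Finset.sum_congr rfl (fun i _ => by ring)
  have hsub : ∑ i ∈ Finset.range (d - 1), (Real.sqrt (A i) - Real.sqrt (A (i + 1)))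
          * ∑ j ∈ Finset.range (i + 1), (Real.sqrt (A j) - Real.sqrt (B j))
      = ∑ i ∈ Finset.range k, (Real.sqrt (A i) - Real.sqrt (A (i + 1)))
          * ∑ j ∈ Finset.range (i + 1), (Real.sqrt (A j) - Real.sqrt (B j)) := by
    refine (Finset.sum_subset (Finset.range_subset_range.mpr (by omega)) ?_).symm
    intro x hx hxk
    rw [Finset.mem_range] at hx
    rw [Finset.mem_range] at hxk
    have h1 : A x = ζ := hAζ x (by omega) (by omega)
    have h2 : A (x + 1) = ζ := hAζ (x + 1) (by omega) (by omega)
    rw [h1, h2, sub_self, zero_mul]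
  -- Step 3 : per-term bound
  have key : ∀ j ∈ Finset.range k, (Real.sqrt (A j) - Real.sqrt (A (j + 1)))
          * ∑ i ∈ Finset.range (j + 1), (Real.sqrt (A i) - Real.sqrt (B i))
      ≤ (((if j < k then α j else ζ) - (if j + 1 < k then α (j + 1) else ζ))
            / (if j < k then α j else ζ))
          * ∑ i ∈ Finset.range (j + 1), (α i - β i) := by
    intro j hj
    rw [Finset.mem_range] at hj
    have hjd : j < d := by omega
    have hj1d : j + 1 < d := by omega
    have hc : 0 < A j := hApos j
    have hcs : 0 < Real.sqrt (A j) := Real.sqrt_pos.mpr hc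
    have hcs2 : Real.sqrt (A j) ^ 2 = A j := Real.sq_sqrt hc.le
    -- T ≥ 0
    have hT0 : 0 ≤ ∑ i ∈ Finset.range (j + 1), (Real.sqrt (A i) - Real.sqrt (B i)) := by
      have hp := perm_prefix_le (n := j + 1) (by omega) σ (fun m => Real.sqrt (A m))
        (fun m => Real.sqrt (B m))
        (fun i => show Real.sqrt (B (i : ℕ)) = Real.sqrt (A ((σ i : Fin d) : ℕ)) by rw [hBA i])
        (Real.sqrt (A j))
        (fun m hm => Real.sqrt_le_sqrt (hAmono m j (by omega) hjd))
        (fun m h1 h2 => Real.sqrt_le_sqrt (hAmono j m (by omega) h2))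
      rw [Finset.sum_sub_distrib]
      linarith
    -- √c * T ≤ S̄
    have hST : Real.sqrt (A j) * ∑ i ∈ Finset.range (j + 1), (Real.sqrt (A i) - Real.sqrt (B i))
        ≤ ∑ i ∈ Finset.range (j + 1), (A i - B i) := by
      have hg := perm_prefix_le (n := j + 1) (by omega) σ
        (fun m => (Real.sqrt (A m) - Real.sqrt (A j) / 2) ^ 2)
        (fun m => (Real.sqrt (B m) - Real.sqrt (A j) / 2) ^ 2)
        (fun i => show (Real.sqrt (B (i : ℕ)) - Real.sqrt (A j) / 2) ^ 2
          = (Real.sqrt (A ((σ i : Fin d) : ℕ)) - Real.sqrt (A j) / 2) ^ 2 by rw [hBA i])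
        (A j / 4)
        (fun m hm => g_lower hc.le (hAmono m j (by omega) hjd))
        (fun m h1 h2 => g_upper (hApos m).le (hAmono j m (by omega) h2))
      have hexp : ∀ x : ℝ, 0 < x →
          (Real.sqrt x - Real.sqrt (A j) / 2) ^ 2
            = x - Real.sqrt (A j) * Real.sqrt x + A j / 4 := by
        intro x hx
        have h1 : Real.sqrt x ^ 2 = x := Real.sq_sqrt hx.le
        linear_combination h1 + (1/4 : ℝ) * hcs2
      rw [Finset.sum_congr rfl (fun i (_ : i ∈ Finset.range (j+1)) => hexp (B i) (hBpos i)),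
        Finset.sum_congr rfl (fun i (_ : i ∈ Finset.range (j+1)) => hexp (A i) (hApos i))] at hg
      rw [Finset.sum_add_distrib, Finset.sum_add_distrib, Finset.sum_sub_distrib,
        Finset.sum_sub_distrib, ← Finset.mul_sum, ← Finset.mul_sum] at hg
      have e1 : ∑ i ∈ Finset.range (j + 1), (A i - B i)
          = ∑ i ∈ Finset.range (j + 1), A i - ∑ i ∈ Finset.range (j + 1), B i :=
        Finset.sum_sub_distrib _ _
      have e2 : Real.sqrt (A j) * ∑ i ∈ Finset.range (j + 1), (Real.sqrt (A i) - Real.sqrt (B i))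
          = Real.sqrt (A j) * ∑ i ∈ Finset.range (j + 1), Real.sqrt (A i)
            - Real.sqrt (A j) * ∑ i ∈ Finset.range (j + 1), Real.sqrt (B i) := by
        rw [Finset.sum_sub_distrib, mul_sub]
      linarith
    -- Δ√ ≤ Δ/√c
    have hmono1 : A (j + 1) ≤ A j := hAmono j (j + 1) (by omega) hj1d
    have hs1 : Real.sqrt (A (j + 1)) ≤ Real.sqrt (A j) := Real.sqrt_le_sqrt hmono1
    have hs1' : Real.sqrt (A (j+1)) ^ 2 = A (j+1) := Real.sq_sqrt (hApos _).le
    have hdelta : Real.sqrt (A j) - Real.sqrt (A (j + 1)) ≤ (A j - A (j + 1)) / Real.sqrt (A j) := by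
      rw [le_div_iff₀ hcs]
      nlinarith [Real.sqrt_nonneg (A (j+1))]
    -- combine
    have hstep : (Real.sqrt (A j) - Real.sqrt (A (j + 1)))
          * ∑ i ∈ Finset.range (j + 1), (Real.sqrt (A i) - Real.sqrt (B i))
        ≤ ((A j - A (j + 1)) / A j) * ∑ i ∈ Finset.range (j + 1), (A i - B i) := by
      calc (Real.sqrt (A j) - Real.sqrt (A (j + 1)))
            * ∑ i ∈ Finset.range (j + 1), (Real.sqrt (A i) - Real.sqrt (B i))
          ≤ ((A j - A (j + 1)) / Real.sqrt (A j))
            * ∑ i ∈ Finset.range (j + 1), (Real.sqrt (A i) - Real.sqrt (B i)) :=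
            mul_le_mul_of_nonneg_right hdelta hT0
        _ = ((A j - A (j + 1)) / A j)
            * (Real.sqrt (A j) * ∑ i ∈ Finset.range (j + 1), (Real.sqrt (A i) - Real.sqrt (B i))) := by
            rw [div_mul_eq_mul_div, div_mul_eq_mul_div, div_eq_div_iff hcs.ne' hc.ne']
            linear_combination (-((A j - A (j + 1))
              * ∑ i ∈ Finset.range (j + 1), (Real.sqrt (A i) - Real.sqrt (B i)))) * hcs2
        _ ≤ ((A j - A (j + 1)) / A j) * ∑ i ∈ Finset.range (j + 1), (A i - B i) :=
            mul_le_mul_of_nonneg_left hST (div_nonneg (by linarith) hc.le)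
    -- S̄ ≤ S and rewrite coefficients
    have hSS : ∑ i ∈ Finset.range (j + 1), (A i - B i)
        ≤ ∑ i ∈ Finset.range (j + 1), (α i - β i) := by
      apply Finset.sum_le_sum
      intro i hi
      rw [Finset.mem_range] at hi
      have h1 : A i = α i := hAeq i (by omega)
      have h2 : β i ≤ B i := le_max_left _ _
      rw [h1]
      linarith
    have hcoef : (((if j < k then α j else ζ) - (if j + 1 < k then α (j + 1) else ζ))
            / (if j < k then α j else ζ)) = (A j - A (j + 1)) / A j := by
      rw [if_pos hj, ← hAeq j hj]
      congr 1
      by_cases hjk : j + 1 < k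
      · rw [if_pos hjk, hAeq (j + 1) hjk]
      · rw [if_neg hjk, hAζ (j + 1) (by omega) hj1d]
    rw [hcoef]
    calc (Real.sqrt (A j) - Real.sqrt (A (j + 1)))
          * ∑ i ∈ Finset.range (j + 1), (Real.sqrt (A i) - Real.sqrt (B i))
        ≤ ((A j - A (j + 1)) / A j) * ∑ i ∈ Finset.range (j + 1), (A i - B i) := hstep
      _ ≤ ((A j - A (j + 1)) / A j) * ∑ i ∈ Finset.range (j + 1), (α i - β i) :=
        mul_le_mul_of_nonneg_left hSS (div_nonneg (by linarith) hc.le)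
  -- Final assembly
  have hkey := Finset.sum_le_sum key
  have hM : M ≤ 4 * L * ζ := M_le_L k hk hζ hζα0
  have hkR : (0 : ℝ) ≤ (k : ℝ) := Nat.cast_nonneg k
  have hfinal : 2 * ∑ i ∈ Finset.range d, (Real.sqrt (A i) - Real.sqrt (B i)) ^ 2
      ≤ 4 * ∑ j ∈ Finset.range k,
          (((if j < k then α j else ζ) - (if j + 1 < k then α (j + 1) else ζ))
              / (if j < k then α j else ζ))
            * ∑ i ∈ Finset.range (j + 1), (α i - β i) := by
    rw [hiden, habel2, hsub]
    linarith
  have hkM : (k + k : ℝ) * M ≤ 8 * k * L * ζ := by nlinarith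
  linarith
end

section
/- Let α be a sorted probability distribution on [d] (α₁ > ⋯ > α_d > 0) with pairwise distinct entries, and set c_j(α) = Σ_{i ≤ j < ℓ} α_ℓ/(αᵢ − α_ℓ) and α'_j = α_j. Then Σ_{j=1}^{k} ((α_j − α_{j+1})/α_j) · c_j(α) ≤ k·d (where α_{k+1} is interpreted appropriately within [d]). More precisely: Σ_{j=1}^{k} ((α_j − α_{j+1})/α_j) Σ_{i ≤ j < ℓ} α_ℓ/(αᵢ − α_ℓ) ≤ Σ_{i ≤ k, ℓ > i} 1 ≤ kd. -/
open Finset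

lemma tele_aux (g : ℕ → ℝ) (i m : ℕ) (h : i ≤ m) :
    ∑ j ∈ Finset.Ico i m, (g j - g (j + 1)) = g i - g m := by
  induction m, h using Nat.le_induction with
  | base => simp
  | succ n hn ih =>
      rw [Finset.sum_Ico_succ_top hn, ih]
      ring

/-- For a strictly decreasing positive probability distribution `α` (0-based),
with `c_j(α) = Σ_{i ≤ j < ℓ} α_ℓ/(αᵢ − α_ℓ)`,
`Σ_{j=1}^{k} ((α_j − α_{j+1})/α_j) · c_j(α) ≤ k·d`. -/
theorem stmt15 {d : ℕ} (α : ℕ → ℝ) (k : ℕ) (hk : 1 ≤ k) (hkd : k < d)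
    (hpos : ∀ i < d, 0 < α i)
    (hsorted : ∀ i j, i < j → j < d → α j < α i)
    (hsum : ∑ i ∈ Finset.range d, α i = 1) :
    ∑ j ∈ Finset.range k, ((α j - α (j + 1)) / α j) *
        (∑ i ∈ Finset.range (j + 1), ∑ l ∈ Finset.Ico (j + 1) d, α l / (α i - α l))
      ≤ (k : ℝ) * d := by
  have key : ∀ i ∈ Finset.range k, ∀ l ∈ Finset.Ico (i + 1) d,
      ∑ j ∈ Finset.Ico i (min k l), ((α j - α (j + 1)) / α j) * (α l / (α i - α l))
        ≤ (1 : ℝ) := by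
    intro i hi l hl
    simp only [Finset.mem_range, Finset.mem_Ico] at hi hl
    have hil : i < l := by omega
    have hld : l < d := hl.2
    have hαl : 0 < α l := hpos l hld
    have hαil : 0 < α i - α l := by linarith [hsorted i l hil hld]
    have hr : 0 < α l / (α i - α l) := div_pos hαl hαil
    set m := min k l with hm
    have him : i ≤ m := by omega
    have hml : m ≤ l := by omega
    rw [← Finset.sum_mul]
    have h1 : ∑ j ∈ Finset.Ico i m, (α j - α (j + 1)) / α j
        ≤ ∑ j ∈ Finset.Ico i m, (α j - α (j + 1)) / α l := by
      apply Finset.sum_le_sum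
      intro j hj
      simp only [Finset.mem_Ico] at hj
      have hjd : j < d := by omega
      have hj1d : j + 1 < d := by omega
      have hαj : 0 < α j := hpos j hjd
      have hnum : 0 ≤ α j - α (j + 1) := by
        linarith [hsorted j (j + 1) (Nat.lt_succ_self j) hj1d]
      have hlj : α l ≤ α j := by
        rcases eq_or_lt_of_le (show j + 1 ≤ l by omega) with h | h
        · subst h; linarith [hsorted j (j+1) (Nat.lt_succ_self j) hld]
        · linarith [hsorted j l (by omega) hld]
      gcongr
    have h2 : ∑ j ∈ Finset.Ico i m, (α j - α (j + 1)) / α l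
        = (α i - α m) / α l := by
      rw [← Finset.sum_div, tele_aux α i m him]
    have hml' : α l ≤ α m := by
      rcases eq_or_lt_of_le hml with h | h
      · rw [h]
      · exact (hsorted m l h hld).le
    have h3 : (α i - α m) / α l ≤ (α i - α l) / α l := by
      gcongr
      all_goals linarith
    have hbound : ∑ j ∈ Finset.Ico i m, (α j - α (j + 1)) / α j
        ≤ (α i - α l) / α l := by
      calc _ ≤ _ := h1
        _ = (α i - α m) / α l := h2
        _ ≤ (α i - α l) / α l := h3
    calc (∑ j ∈ Finset.Ico i m, (α j - α (j + 1)) / α j) * (α l / (α i - α l))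
        ≤ ((α i - α l) / α l) * (α l / (α i - α l)) := by
          exact mul_le_mul_of_nonneg_right hbound hr.le
      _ = 1 := by field_simp
  calc ∑ j ∈ Finset.range k, ((α j - α (j + 1)) / α j) *
        (∑ i ∈ Finset.range (j + 1), ∑ l ∈ Finset.Ico (j + 1) d, α l / (α i - α l))
      = ∑ j ∈ Finset.range k, ∑ i ∈ Finset.range (j + 1),
          ∑ l ∈ Finset.Ico (j + 1) d, ((α j - α (j + 1)) / α j) * (α l / (α i - α l)) := by
        simp only [Finset.mul_sum]
    _ = ∑ i ∈ Finset.range k, ∑ j ∈ Finset.Ico i k,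
          ∑ l ∈ Finset.Ico (j + 1) d, ((α j - α (j + 1)) / α j) * (α l / (α i - α l)) := by
        apply Finset.sum_comm'
        intro j i
        simp only [Finset.mem_range, Finset.mem_Ico]
        omega
    _ = ∑ i ∈ Finset.range k, ∑ l ∈ Finset.Ico (i + 1) d,
          ∑ j ∈ Finset.Ico i (min k l), ((α j - α (j + 1)) / α j) * (α l / (α i - α l)) := by
        refine Finset.sum_congr rfl fun i hi => ?_
        apply Finset.sum_comm'
        intro j l
        simp only [Finset.mem_Ico]
        omega
    _ ≤ ∑ i ∈ Finset.range k, ∑ l ∈ Finset.Ico (i + 1) d, (1 : ℝ) := by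
        apply Finset.sum_le_sum
        intro i hi
        exact Finset.sum_le_sum (key i hi)
    _ ≤ (k : ℝ) * d := by
        simp only [Finset.sum_const, nsmul_eq_mul, mul_one, Nat.card_Ico]
        calc ∑ i ∈ Finset.range k, ((d - (i + 1) : ℕ) : ℝ)
            ≤ ∑ i ∈ Finset.range k, (d : ℝ) := by
              apply Finset.sum_le_sum
              intro i _
              exact_mod_cast Nat.cast_le.mpr (Nat.sub_le d (i + 1))
          _ = (k : ℝ) * d := by simp [mul_comm]
end
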